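/- arXiv:2302.03615 — 5 statements merged into one kernel-verified Lean document; each statement's English description precedes it below -/
import Mathlib

section
/- Let A ∈ ℝ^{n×n} be symmetric with xᵀAx ≤ xᵀx for every x ∈ ℝ^n, and let λ_1 ≥ λ_2 ≥ ⋯ ≥ λ_n be its eigenvalues listed in decreasing order with multiplicity. For every k ≤ n, the minimum of ‖I_k − YᵀAY‖ over all Y ∈ ℝ^{n×k} with YᵀY = I_k equals (Σ_{ν=1}^k (1−λ_ν)²)^{1/2}; that is, every Y ∈ ℝ^{n×k} with orthonormal columns satisfies ‖I_k − YᵀAY‖ ≥ (Σ_{ν=1}^k (1−λ_ν)²)^{1/2}, and equality is attained when the columns of Y are orthonormal eigenvectors of A corresponding to λ_1,…,λ_k. -/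
open Matrix

/-- Frobenius norm of a real matrix. -/
noncomputable def frobNorm {m l : Type*} [Fintype m] [Fintype l] (M : Matrix m l ℝ) : ℝ :=
  Real.sqrt (∑ i, ∑ j, (M i j) ^ 2)

section Helpers

variable {n k : ℕ}

lemma sumSq_eq_trace {m l : Type*} [Fintype m] [Fintype l] (M : Matrix m l ℝ) :
    ∑ i, ∑ j, (M i j) ^ 2 = Matrix.trace (Mᵀ * M) := by
  rw [Matrix.trace, Finset.sum_comm]
  simp [Matrix.mul_apply, Matrix.diag, pow_two]

lemma sumSq_conj (Q M : Matrix (Fin k) (Fin k) ℝ) (hQ : Qᵀ * Q = 1) :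
    ∑ i, ∑ j, ((Q * M * Qᵀ) i j) ^ 2 = ∑ i, ∑ j, (M i j) ^ 2 := by
  rw [sumSq_eq_trace, sumSq_eq_trace]
  have h1 : (Q * M * Qᵀ)ᵀ * (Q * M * Qᵀ) = Q * (Mᵀ * M) * Qᵀ := by
    simp only [transpose_mul, transpose_transpose, Matrix.mul_assoc]
    rw [← Matrix.mul_assoc Qᵀ Q (M * Qᵀ), hQ, Matrix.one_mul]
  rw [h1, Matrix.trace_mul_cycle, ← Matrix.mul_assoc, hQ, Matrix.one_mul]

lemma sumSq_diagonal (d : Fin k → ℝ) :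
    ∑ i, ∑ j, ((Matrix.diagonal d) i j) ^ 2 = ∑ i, d i ^ 2 := by
  simp [Matrix.diagonal_apply, ite_pow, Finset.sum_ite_eq]

lemma mulVec_dot (Z : Matrix (Fin n) (Fin k) ℝ) (hZ : Zᵀ * Z = 1) (a b : Fin k → ℝ) :
    (Z *ᵥ a) ⬝ᵥ (Z *ᵥ b) = a ⬝ᵥ b := by
  rw [dotProduct_mulVec, vecMul_mulVec, hZ, vecMul_one]

lemma sum_dotProduct' {m : Type*} [Fintype m] {ι : Type*} (s : Finset ι)
    (f : ι → (m → ℝ)) (w : m → ℝ) :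
    (∑ i ∈ s, f i) ⬝ᵥ w = ∑ i ∈ s, f i ⬝ᵥ w := by
  simp only [dotProduct, Finset.sum_apply, Finset.sum_mul]
  exact Finset.sum_comm

lemma dotProduct_sum' {m : Type*} [Fintype m] {ι : Type*} (s : Finset ι)
    (f : ι → (m → ℝ)) (w : m → ℝ) :
    w ⬝ᵥ (∑ i ∈ s, f i) = ∑ i ∈ s, w ⬝ᵥ f i := by
  simp only [dotProduct, Finset.sum_apply, Finset.mul_sum]
  exact Finset.sum_comm

lemma interlace (hkn : k ≤ n) (lam : Fin n → ℝ)
    (hmono : ∀ i j : Fin n, i ≤ j → lam j ≤ lam i)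
    (Z : Matrix (Fin n) (Fin k) ℝ) (hZ : Zᵀ * Z = 1)
    (μ : Fin k → ℝ) (W : Matrix (Fin k) (Fin k) ℝ) (hW : Wᵀ * W = 1)
    (heig : ∀ j, (Zᵀ * Matrix.diagonal lam * Z) *ᵥ (fun i => W i j) = μ j • (fun i => W i j))
    (hμmono : ∀ a b : Fin k, a ≤ b → μ b ≤ μ a)
    (ν : Fin k) : μ ν ≤ lam (Fin.castLE hkn ν) := by
  classical
  set B : Matrix (Fin k) (Fin k) ℝ := Zᵀ * Matrix.diagonal lam * Z with hBdef
  set ν' : Fin n := Fin.castLE hkn ν with hν'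
  -- index inclusion
  have hι : ∀ j : Fin (ν.val + 1), j.val < k :=
    fun j => lt_of_le_of_lt (Nat.lt_succ_iff.mp j.isLt) ν.isLt
  set ι : Fin (ν.val + 1) → Fin k := fun j => ⟨j.val, hι j⟩ with hιdef
  have hιinj : Function.Injective ι := by
    intro a b hab
    have h0 : (ι a).val = (ι b).val := congrArg Fin.val hab
    rw [hιdef] at h0
    exact Fin.ext h0
  have hιle : ∀ j, ι j ≤ ν := fun j => Nat.lt_succ_iff.mp j.isLt
  -- columns of W
  set ws : Fin (ν.val + 1) → (Fin k → ℝ) := fun j => (fun i => W i (ι j)) with hwsdef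
  have horth : ∀ a b, ws a ⬝ᵥ ws b = if a = b then 1 else 0 := by
    intro a b
    have h1 : ws a ⬝ᵥ ws b = (Wᵀ * W) (ι a) (ι b) := by
      simp [Matrix.mul_apply, dotProduct, Matrix.transpose_apply, hwsdef]
    rw [h1, hW, Matrix.one_apply]
    by_cases h : a = b
    · simp [h]
    · have : ι a ≠ ι b := fun hc => h (hιinj hc)
      simp [h, this]
  set F : Fin (ν.val + 1) → (Fin n → ℝ) := fun j => Z *ᵥ ws j with hFdef
  have hFdot : ∀ a b, F a ⬝ᵥ F b = if a = b then 1 else 0 := by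
    intro a b
    rw [hFdef]
    rw [mulVec_dot Z hZ]
    exact horth a b
  have hFli : LinearIndependent ℝ F := by
    rw [Fintype.linearIndependent_iff]
    intro g hg a
    have h2 := congrArg (fun v => v ⬝ᵥ F a) hg
    simp only [sum_dotProduct', smul_dotProduct, zero_dotProduct,
      smul_eq_mul, hFdot] at h2
    simpa [Finset.sum_ite_eq'] using h2
  -- the two subspaces
  set S : Submodule ℝ (Fin n → ℝ) := Submodule.span ℝ (Set.range F) with hSdef
  have hSrank : Module.finrank ℝ S = ν.val + 1 := by
    rw [finrank_span_eq_card hFli, Fintype.card_fin]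
  set proj : (Fin n → ℝ) →ₗ[ℝ] (Fin ν'.val → ℝ) :=
    LinearMap.funLeft ℝ ℝ (fun i : Fin ν'.val => Fin.castLE ν'.isLt.le i) with hprojdef
  set T : Submodule ℝ (Fin n → ℝ) := LinearMap.ker proj with hTdef
  have hTmem : ∀ x : Fin n → ℝ, x ∈ T ↔
      ∀ j : Fin ν'.val, x (Fin.castLE ν'.isLt.le j) = 0 := by
    intro x
    rw [hTdef, LinearMap.mem_ker, hprojdef]
    constructor
    · intro h j; exact congrFun h j
    · intro h; funext j; exact h j
  have hTrank : ν'.val + Module.finrank ℝ T = n := by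
    have hsurj : Function.Surjective proj :=
      LinearMap.funLeft_surjective_of_injective ℝ ℝ _ (Fin.castLE_injective _)
    have h3 := LinearMap.finrank_range_add_finrank_ker proj
    rw [LinearMap.range_eq_top.mpr hsurj, finrank_top, Module.finrank_fin_fun,
      Module.finrank_fin_fun] at h3
    exact h3
  -- intersection is nonzero
  have hpos : 0 < Module.finrank ℝ ↥(S ⊓ T) := by
    have h4 := Submodule.finrank_sup_add_finrank_inf_eq S T
    have h5 : Module.finrank ℝ ↥(S ⊔ T) ≤ n := by
      have := Submodule.finrank_le (S ⊔ T)
      rwa [Module.finrank_fin_fun] at this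
    have hν'ν : ν'.val = ν.val := rfl
    omega
  obtain ⟨⟨x, hxST⟩, hx0⟩ := Module.finrank_pos_iff_exists_ne_zero.mp hpos
  have hxS : x ∈ S := hxST.1
  have hxT : x ∈ T := hxST.2
  have hxne : x ≠ 0 := by
    intro h; exact hx0 (Subtype.ext h)
  have hxS' : ∃ c : Fin (ν.val + 1) → ℝ, ∑ j, c j • F j = x :=
    (Submodule.mem_span_range_iff_exists_fun ℝ (v := F) (x := x)).mp hxS
  obtain ⟨c, hc⟩ := hxS' 
  set wv : Fin k → ℝ := ∑ j, c j • ws j with hwvdef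
  have hZw : Z *ᵥ wv = x := by
    rw [hwvdef, ← hc]
    rw [show Z *ᵥ (∑ j, c j • ws j) = Z.mulVecLin (∑ j, c j • ws j) from rfl]
    rw [map_sum]
    simp [Matrix.mulVecLin_apply, _root_.map_smul, hFdef]
  -- wv ⬝ᵥ wv
  have hwdot : wv ⬝ᵥ wv = ∑ j, c j ^ 2 := by
    rw [hwvdef]
    rw [sum_dotProduct']
    refine Finset.sum_congr rfl fun a _ => ?_
    rw [smul_dotProduct, dotProduct_sum']
    simp only [dotProduct_smul, smul_eq_mul, horth]
    simp [Finset.mul_sum, Finset.sum_ite_eq', pow_two]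
  -- B *ᵥ wv
  have hBw : wv ⬝ᵥ (B *ᵥ wv) = ∑ j, μ (ι j) * c j ^ 2 := by
    have h6 : B *ᵥ wv = ∑ j, (c j * μ (ι j)) • ws j := by
      rw [hwvdef]
      rw [show B *ᵥ (∑ j, c j • ws j) = B.mulVecLin (∑ j, c j • ws j) from rfl, map_sum]
      refine Finset.sum_congr rfl fun j _ => ?_
      rw [Matrix.mulVecLin_apply, Matrix.mulVec_smul, heig (ι j)]
      rw [smul_smul, mul_comm]
    rw [h6, hwvdef, sum_dotProduct']
    refine Finset.sum_congr rfl fun a _ => ?_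
    rw [smul_dotProduct, dotProduct_sum']
    simp only [dotProduct_smul, smul_eq_mul, horth]
    simp [Finset.mul_sum, Finset.sum_ite_eq', pow_two]
    ring
  -- relate to x
  have hxx : x ⬝ᵥ x = ∑ j, c j ^ 2 := by
    rw [← hZw, mulVec_dot Z hZ, hwdot]
  have hq : x ⬝ᵥ (Matrix.diagonal lam *ᵥ x) = wv ⬝ᵥ (B *ᵥ wv) := by
    rw [hBdef]
    rw [← Matrix.mulVec_mulVec, ← Matrix.mulVec_mulVec]
    rw [dotProduct_mulVec wv Zᵀ, vecMul_transpose, hZw]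
  -- lower bound
  have hlow : μ ν * (x ⬝ᵥ x) ≤ x ⬝ᵥ (Matrix.diagonal lam *ᵥ x) := by
    rw [hq, hBw, hxx, Finset.mul_sum]
    refine Finset.sum_le_sum fun j _ => ?_
    exact mul_le_mul_of_nonneg_right (hμmono (ι j) ν (hιle j)) (sq_nonneg _)
  -- upper bound
  have hxzero : ∀ i : Fin n, i < ν' → x i = 0 := by
    intro i hi
    have h7 := (hTmem x).mp hxT ⟨i.val, hi⟩
    simpa using h7
  have hup : x ⬝ᵥ (Matrix.diagonal lam *ᵥ x) ≤ lam ν' * (x ⬝ᵥ x) := by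
    have hdv : ∀ i, (Matrix.diagonal lam *ᵥ x) i = lam i * x i := by
      intro i
      simp [Matrix.mulVec, dotProduct, Matrix.diagonal_apply, Finset.sum_ite_eq]
    rw [dotProduct, dotProduct, Finset.mul_sum]
    simp only [hdv]
    refine Finset.sum_le_sum fun i _ => ?_
    rcases lt_or_ge i ν' with h | h
    · rw [hxzero i h]; ring_nf; exact le_refl 0
    · have h8 : lam i ≤ lam ν' := hmono ν' i h
      have h9 : x i * (lam i * x i) = lam i * (x i * x i) := by ring
      rw [h9]
      exact mul_le_mul_of_nonneg_right h8 (mul_self_nonneg _)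
  -- conclude
  have hs : 0 < x ⬝ᵥ x := by
    rw [dotProduct]
    have : ∃ i, x i ≠ 0 := by
      by_contra h
      push_neg at h
      exact hxne (funext h)
    obtain ⟨i, hi⟩ := this
    refine Finset.sum_pos' (fun j _ => mul_self_nonneg _) ⟨i, Finset.mem_univ i, ?_⟩
    exact mul_self_pos.mpr hi
  have h11 := le_trans hlow hup
  exact le_of_mul_le_mul_right h11 hs

end Helpers

/-- The minimum of `‖I - YᵀAY‖` over matrices `Y` with orthonormal columns equals
`(∑_{ν=1}^k (1-λ_ν)²)^{1/2}`: every such `Y` gives a value at least this large, and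
equality holds when the columns of `Y` are orthonormal eigenvectors of `A`
corresponding to the `k` largest eigenvalues `λ_1 ≥ ⋯ ≥ λ_k`. -/
theorem stmt0 (n k : ℕ) (hn : 0 < n) (hk : 0 < k) (hkn : k ≤ n)
    (A : Matrix (Fin n) (Fin n) ℝ) (hAsymm : A.IsSymm)
    (hAle : ∀ x : Fin n → ℝ, x ⬝ᵥ A.mulVec x ≤ x ⬝ᵥ x)
    (lam : Fin n → ℝ) (hmono : ∀ i j : Fin n, i ≤ j → lam j ≤ lam i)
    (U : Matrix (Fin n) (Fin n) ℝ) (hU : Uᵀ * U = 1)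
    (hdiag : A = U * Matrix.diagonal lam * Uᵀ) :
    (∀ Y : Matrix (Fin n) (Fin k) ℝ, Yᵀ * Y = 1 →
      Real.sqrt (∑ ν : Fin k, (1 - lam (Fin.castLE hkn ν)) ^ 2) ≤
        frobNorm ((1 : Matrix (Fin k) (Fin k) ℝ) - Yᵀ * A * Y)) ∧
    (∀ Y : Matrix (Fin n) (Fin k) ℝ, Yᵀ * Y = 1 →
      (∀ j : Fin k, A.mulVec (fun i => Y i j) = lam (Fin.castLE hkn j) • (fun i => Y i j)) →
      frobNorm ((1 : Matrix (Fin k) (Fin k) ℝ) - Yᵀ * A * Y) =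
        Real.sqrt (∑ ν : Fin k, (1 - lam (Fin.castLE hkn ν)) ^ 2)) := by
  have hUU : U * Uᵀ = 1 := mul_eq_one_comm.mp hU
  have hlam1 : ∀ i : Fin n, lam i ≤ 1 := by
    intro i
    set u : Fin n → ℝ := fun r => U r i with hudef
    have hu1 : u ⬝ᵥ u = 1 := by
      have h3 : u ⬝ᵥ u = (Uᵀ * U) i i := by
        simp [Matrix.mul_apply, dotProduct, Matrix.transpose_apply, hudef]
      rw [h3, hU, Matrix.one_apply_eq]
    have hAu : A *ᵥ u = lam i • u := by
      have h4 : u = U *ᵥ Pi.single i 1 := by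
        funext r; simp [Matrix.mulVec_single, hudef]
      rw [hdiag, h4, Matrix.mulVec_mulVec, Matrix.mul_assoc (U * Matrix.diagonal lam) Uᵀ U, hU, Matrix.mul_one, ← Matrix.mulVec_mulVec, Matrix.diagonal_mulVec_single, mul_one]
      have h5 : (Pi.single i (lam i) : Fin n → ℝ) = lam i • (Pi.single i 1 : Fin n → ℝ) := by
        funext r
        rcases eq_or_ne r i with h | h
        · subst h; simp
        · simp [Pi.single_eq_of_ne h]
      rw [h5, Matrix.mulVec_smul]
    have h6 := hAle u
    rw [hAu, dotProduct_smul, smul_eq_mul, hu1, mul_one] at h6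
    exact h6
  constructor
  · -- inequality
    intro Y hY
    set Z : Matrix (Fin n) (Fin k) ℝ := Uᵀ * Y with hZdef
    have hZ : Zᵀ * Z = 1 := by
      rw [hZdef, Matrix.transpose_mul, Matrix.transpose_transpose,
        Matrix.mul_assoc, ← Matrix.mul_assoc U Uᵀ Y, hUU, Matrix.one_mul, hY]
    have hBZ : Yᵀ * A * Y = Zᵀ * Matrix.diagonal lam * Z := by
      rw [hZdef, Matrix.transpose_mul, Matrix.transpose_transpose, hdiag]
      simp only [Matrix.mul_assoc]
    have hB : (Yᵀ * A * Y).IsHermitian := by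
      show (Yᵀ * A * Y)ᴴ = Yᵀ * A * Y
      rw [Matrix.conjTranspose_eq_transpose_of_trivial, Matrix.transpose_mul,
        Matrix.transpose_mul, Matrix.transpose_transpose, hAsymm.eq, Matrix.mul_assoc]
    set μ : Fin k → ℝ := hB.eigenvalues with hμdef
    set V : Matrix (Fin k) (Fin k) ℝ := (hB.eigenvectorUnitary : Matrix (Fin k) (Fin k) ℝ)
      with hVdef
    have hV : Vᵀ * V = 1 := by
      have h7 := Matrix.mem_unitaryGroup_iff'.mp hB.eigenvectorUnitary.2
      rwa [Matrix.star_eq_conjTranspose, Matrix.conjTranspose_eq_transpose_of_trivial] at h7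
    have hV' : V * Vᵀ = 1 := mul_eq_one_comm.mp hV
    have hspec : Yᵀ * A * Y = V * Matrix.diagonal μ * Vᵀ := by
      have h8 := hB.spectral_theorem
      rwa [Unitary.conjStarAlgAut_apply, Matrix.star_eq_conjTranspose, Matrix.conjTranspose_eq_transpose_of_trivial,
        show RCLike.ofReal ∘ μ = μ from funext fun i => rfl] at h8
    have hcol : ∀ j, (Yᵀ * A * Y) *ᵥ (fun i => V i j) = μ j • (fun i => V i j) := by
      intro j
      have h9 : (fun i => V i j) = ⇑(hB.eigenvectorBasis j) :=
        funext fun i => hB.eigenvectorUnitary_apply i j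
      rw [h9]
      exact hB.mulVec_eigenvectorBasis j
    set π : Equiv.Perm (Fin k) := Tuple.sort (fun i => - μ i) with hπdef
    have hsort : Monotone ((fun i => - μ i) ∘ π) := Tuple.monotone_sort _
    have hμmono : ∀ a b : Fin k, a ≤ b → μ (π b) ≤ μ (π a) := by
      intro a b hab
      have h10 := hsort hab
      simp only [Function.comp_apply] at h10
      linarith
    set W : Matrix (Fin k) (Fin k) ℝ := Matrix.of fun i j => V i (π j) with hWdef
    have hW : Wᵀ * W = 1 := by
      ext a b
      have h11 : (Wᵀ * W) a b = (Vᵀ * V) (π a) (π b) := by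
        simp [Matrix.mul_apply, Matrix.transpose_apply, hWdef]
      rw [h11, hV]
      rw [Matrix.one_apply, Matrix.one_apply]
      by_cases h : a = b
      · simp [h]
      · have h12 : π a ≠ π b := fun hc => h (π.injective hc)
        simp [h, h12]
    have heig' : ∀ j, (Zᵀ * Matrix.diagonal lam * Z) *ᵥ (fun i => W i j) =
        μ (π j) • (fun i => W i j) := by
      intro j
      rw [← hBZ]
      exact hcol (π j)
    have hint : ∀ ν : Fin k, μ (π ν) ≤ lam (Fin.castLE hkn ν) := fun ν =>
      interlace hkn lam hmono Z hZ (fun j => μ (π j)) W hW heig' hμmono ν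
    unfold frobNorm
    apply Real.sqrt_le_sqrt
    calc ∑ ν : Fin k, (1 - lam (Fin.castLE hkn ν)) ^ 2
        ≤ ∑ ν : Fin k, (1 - μ (π ν)) ^ 2 := by
          refine Finset.sum_le_sum fun ν _ => ?_
          have ha : (0:ℝ) ≤ 1 - lam (Fin.castLE hkn ν) := by linarith [hlam1 (Fin.castLE hkn ν)]
          have hb : 1 - lam (Fin.castLE hkn ν) ≤ 1 - μ (π ν) := by linarith [hint ν]
          exact pow_le_pow_left₀ ha hb 2
      _ = ∑ i : Fin k, (1 - μ i) ^ 2 := Equiv.sum_comp π (fun i => (1 - μ i) ^ 2)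
      _ = ∑ i, ∑ j, (((1 : Matrix (Fin k) (Fin k) ℝ) - Yᵀ * A * Y) i j) ^ 2 := by
          have hone : (1 : Matrix (Fin k) (Fin k) ℝ) - Yᵀ * A * Y =
              V * Matrix.diagonal (fun i => 1 - μ i) * Vᵀ := by
            have hd : Matrix.diagonal (fun i => 1 - μ i) =
                (1 : Matrix (Fin k) (Fin k) ℝ) - Matrix.diagonal μ := by
              rw [← Matrix.diagonal_one, Matrix.diagonal_sub]
            rw [hd, Matrix.mul_sub, Matrix.mul_one, Matrix.sub_mul, hV', ← hspec]
          rw [hone, sumSq_conj V _ hV, sumSq_diagonal]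
  · -- equality
    intro Y hY heigY
    unfold frobNorm
    congr 1
    have hentry : ∀ i j, (Yᵀ * A * Y) i j =
        lam (Fin.castLE hkn j) * (1 : Matrix (Fin k) (Fin k) ℝ) i j := by
      intro i j
      have h1 : ∀ r, (A * Y) r j = lam (Fin.castLE hkn j) * Y r j := by
        intro r
        have h2 := congrFun (heigY j) r
        simp only [Matrix.mulVec, dotProduct, Pi.smul_apply, smul_eq_mul] at h2
        rw [Matrix.mul_apply]
        exact h2
      calc (Yᵀ * A * Y) i j = ∑ r, Yᵀ i r * (A * Y) r j := by
            rw [Matrix.mul_assoc, Matrix.mul_apply]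
        _ = ∑ r, lam (Fin.castLE hkn j) * (Y r i * Y r j) := by
            refine Finset.sum_congr rfl fun r _ => ?_
            rw [h1 r, Matrix.transpose_apply]
            ring
        _ = lam (Fin.castLE hkn j) * (Yᵀ * Y) i j := by
            rw [Matrix.mul_apply, Finset.mul_sum]
            refine Finset.sum_congr rfl fun r _ => ?_
            rw [Matrix.transpose_apply]
        _ = lam (Fin.castLE hkn j) * (1 : Matrix (Fin k) (Fin k) ℝ) i j := by rw [hY]
    have hsub : ∀ i j, (((1 : Matrix (Fin k) (Fin k) ℝ) - Yᵀ * A * Y)) i j =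
        (1 - lam (Fin.castLE hkn j)) * (1 : Matrix (Fin k) (Fin k) ℝ) i j := by
      intro i j
      rw [Matrix.sub_apply, hentry]
      ring
    simp only [hsub]
    rw [Finset.sum_comm]
    refine Finset.sum_congr rfl fun j _ => ?_
    have : ∀ i, ((1 - lam (Fin.castLE hkn j)) * (1 : Matrix (Fin k) (Fin k) ℝ) i j) ^ 2 =
        if i = j then (1 - lam (Fin.castLE hkn j)) ^ 2 else 0 := by
      intro i
      rcases eq_or_ne i j with h | h
      · subst h; simp [Matrix.one_apply_eq]
      · simp [Matrix.one_apply_ne h, h]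
    simp only [this]
    simp
end

section
/- (Cheeger inequality for Ψcut.) For every k-partitioning p of the graph, L_k = (Σ_{ν=2}^k (1−λ_ν)²)^{1/2} ≤ Ψcut(p) = ‖I_k − YᵀAY‖; consequently L_k ≤ Ψcut_G, the minimum of Ψcut over all k-partitionings. -/
open Matrix

/-- Total degree `ω_ℓ = ∑_{i : p i = ℓ} d i` of partition `ℓ`. -/
noncomputable def partVol {n k : ℕ} (d : Fin n → ℝ) (p : Fin n → Fin k) (ℓ : Fin k) : ℝ :=
  ∑ i ∈ Finset.univ.filter (fun i => p i = ℓ), d i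

/-- The partition indicator matrix `Y = D^{1/2} Ω^{-1/2} G`, with entries
`Y i ℓ = (d i / ω_{p i})^{1/2}` if `ℓ = p i`, and `0` otherwise. -/
noncomputable def Ypart {n k : ℕ} (d : Fin n → ℝ) (p : Fin n → Fin k) :
    Matrix (Fin n) (Fin k) ℝ :=
  fun i ℓ => if ℓ = p i then Real.sqrt (d i / partVol d p (p i)) else 0

section Aux

noncomputable def extZero {m : ℕ} (P : Fin m → Prop) [DecidablePred P] :
    ({j // P j} → ℝ) →ₗ[ℝ] (Fin m → ℝ) where
  toFun c := fun j => if h : P j then c ⟨j, h⟩ else 0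
  map_add' c₁ c₂ := by funext j; by_cases h : P j <;> simp [h]
  map_smul' r c := by funext j; by_cases h : P j <;> simp [h]

lemma extZero_inj {m : ℕ} (P : Fin m → Prop) [DecidablePred P] :
    Function.Injective (extZero P) := by
  intro c₁ c₂ h
  funext j
  have := congrFun h j.1
  simpa [extZero, j.2] using this

lemma extZero_zero {m : ℕ} (P : Fin m → Prop) [DecidablePred P] (c : {j // P j} → ℝ)
    {j : Fin m} (h : ¬ P j) : extZero P c j = 0 := by simp [extZero, h]

lemma quadform {n m : ℕ} (W : Matrix (Fin n) (Fin m) ℝ) (R : Matrix (Fin n) (Fin n) ℝ)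
    (c : Fin m → ℝ) :
    (W.mulVec c) ⬝ᵥ (R.mulVec (W.mulVec c)) = c ⬝ᵥ ((Wᵀ * R * W).mulVec c) := by
  conv_rhs => rw [← Matrix.mulVec_mulVec, ← Matrix.mulVec_mulVec,
    Matrix.dotProduct_mulVec, Matrix.vecMul_transpose]

lemma diagQuad {m : ℕ} (ρ : Fin m → ℝ) (c : Fin m → ℝ) :
    c ⬝ᵥ ((Matrix.diagonal ρ).mulVec c) = ∑ j, ρ j * c j ^ 2 := by
  simp only [dotProduct, Matrix.mulVec_diagonal]
  exact Finset.sum_congr rfl fun j _ => by ring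

lemma normform {n m : ℕ} (W : Matrix (Fin n) (Fin m) ℝ) (hW : Wᵀ * W = 1) (c : Fin m → ℝ) :
    (W.mulVec c) ⬝ᵥ (W.mulVec c) = c ⬝ᵥ c := by
  have h := quadform W 1 c
  rw [Matrix.one_mulVec, Matrix.mul_one, hW, Matrix.one_mulVec] at h
  exact h

lemma dotProduct_self_eq_sum_sq {m : ℕ} (c : Fin m → ℝ) : c ⬝ᵥ c = ∑ j, c j ^ 2 :=
  Finset.sum_congr rfl fun j _ => by ring

lemma dotProduct_self_pos {m : ℕ} {x : Fin m → ℝ} (hx : x ≠ 0) : 0 < x ⬝ᵥ x := by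
  obtain ⟨i, hi⟩ : ∃ i, x i ≠ 0 := by
    by_contra h
    push_neg at h
    exact hx (funext h)
  refine Finset.sum_pos' (fun j _ => mul_self_nonneg _) ⟨i, Finset.mem_univ i, ?_⟩
  exact mul_self_pos.mpr hi

lemma mulVecLin_inj {n m : ℕ} (W : Matrix (Fin n) (Fin m) ℝ) (hW : Wᵀ * W = 1) :
    Function.Injective W.mulVecLin := by
  intro c₁ c₂ h
  simp only [Matrix.mulVecLin_apply] at h
  have h2 := congrArg (Wᵀ.mulVec ·) h
  simp only [Matrix.mulVec_mulVec, hW, Matrix.one_mulVec] at h2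
  exact h2

lemma interlace_s5 {n k : ℕ} (hkn : k ≤ n)
    (N U : Matrix (Fin n) (Fin n) ℝ) (μ : Fin n → ℝ) (hμ : Monotone μ)
    (hU : Uᵀ * U = 1) (hN : Uᵀ * N * U = Matrix.diagonal μ)
    (W : Matrix (Fin n) (Fin k) ℝ) (hW : Wᵀ * W = 1)
    (θ : Fin k → ℝ) (hθ : Monotone θ) (hWNW : Wᵀ * N * W = Matrix.diagonal θ)
    (i : Fin k) : μ (Fin.castLE hkn i) ≤ θ i := by
  classical
  set i' : Fin n := Fin.castLE hkn i with hi'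
  set PS : Fin k → Prop := fun j => j ≤ i with hPS
  set PT : Fin n → Prop := fun j => i' ≤ j with hPT
  set LS := LinearMap.range (W.mulVecLin ∘ₗ extZero PS) with hLS
  set LT := LinearMap.range (U.mulVecLin ∘ₗ extZero PT) with hLT
  have hSinj : Function.Injective (W.mulVecLin ∘ₗ extZero PS) :=
    (mulVecLin_inj W hW).comp (extZero_inj PS)
  have hTinj : Function.Injective (U.mulVecLin ∘ₗ extZero PT) :=
    (mulVecLin_inj U hU).comp (extZero_inj PT)
  have hcardS : Fintype.card {j // PS j} = (i : ℕ) + 1 := by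
    rw [Fintype.card_subtype]
    have : Finset.univ.filter PS = Finset.Iic i := by
      ext j; simp [hPS, Finset.mem_Iic]
    rw [this, Fin.card_Iic]
  have hcardT : Fintype.card {j // PT j} = n - (i : ℕ) := by
    rw [Fintype.card_subtype]
    have : Finset.univ.filter PT = Finset.Ici i' := by
      ext j; simp [hPT, Finset.mem_Ici]
    rw [this, Fin.card_Ici]
    rfl
  have hrS : Module.finrank ℝ LS = (i : ℕ) + 1 := by
    rw [hLS, LinearMap.finrank_range_of_inj hSinj, Module.finrank_pi, hcardS]
  have hrT : Module.finrank ℝ LT = n - (i : ℕ) := by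
    rw [hLT, LinearMap.finrank_range_of_inj hTinj, Module.finrank_pi, hcardT]
  have hsum := Submodule.finrank_sup_add_finrank_inf_eq LS LT
  have hsuple : Module.finrank ℝ ↥(LS ⊔ LT) ≤ n := by
    have := Submodule.finrank_le (LS ⊔ LT)
    rwa [Module.finrank_pi, Fintype.card_fin] at this
  have hinfpos : LS ⊓ LT ≠ ⊥ := by
    intro hbot
    rw [hbot, hrS, hrT] at hsum
    simp only [finrank_bot, add_zero] at hsum
    have hin : (i : ℕ) < n := lt_of_lt_of_le i.isLt hkn
    omega
  obtain ⟨x, hxmem, hxne⟩ := Submodule.exists_mem_ne_zero_of_ne_bot hinfpos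
  obtain ⟨hxS, hxT⟩ := Submodule.mem_inf.mp hxmem
  obtain ⟨cS', hcS⟩ := hxS
  obtain ⟨cT', hcT⟩ := hxT
  set cS := extZero PS cS' with hcSdef
  set cT := extZero PT cT' with hcTdef
  have hxW : x = W.mulVec cS := by
    rw [← hcS]; rfl
  have hxU : x = U.mulVec cT := by
    rw [← hcT]; rfl
  have hnormS : x ⬝ᵥ x = ∑ j, cS j ^ 2 := by
    rw [hxW, normform W hW, dotProduct_self_eq_sum_sq]
  have hnormT : x ⬝ᵥ x = ∑ j, cT j ^ 2 := by
    rw [hxU, normform U hU, dotProduct_self_eq_sum_sq]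
  have hquadS : x ⬝ᵥ (N.mulVec x) = ∑ j, θ j * cS j ^ 2 := by
    rw [hxW, quadform, hWNW, diagQuad]
  have hquadT : x ⬝ᵥ (N.mulVec x) = ∑ j, μ j * cT j ^ 2 := by
    rw [hxU, quadform, hN, diagQuad]
  have hub : x ⬝ᵥ (N.mulVec x) ≤ θ i * (x ⬝ᵥ x) := by
    rw [hquadS, hnormS, Finset.mul_sum]
    refine Finset.sum_le_sum fun j _ => ?_
    by_cases h : PS j
    · exact mul_le_mul_of_nonneg_right (hθ h) (sq_nonneg _)
    · have hz : cS j = 0 := extZero_zero PS cS' h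
      rw [hz]; simp
  have hlb : μ i' * (x ⬝ᵥ x) ≤ x ⬝ᵥ (N.mulVec x) := by
    rw [hquadT, hnormT, Finset.mul_sum]
    refine Finset.sum_le_sum fun j _ => ?_
    by_cases h : PT j
    · exact mul_le_mul_of_nonneg_right (hμ h) (sq_nonneg _)
    · have hz : cT j = 0 := extZero_zero PT cT' h
      rw [hz]; simp
  have hpos := dotProduct_self_pos hxne
  exact le_of_mul_le_mul_right (le_trans hlb hub) hpos

lemma quad_le_one {n : ℕ} (B : Matrix (Fin n) (Fin n) ℝ) (hBsymm : B.IsSymm)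
    (hBnn : ∀ i j, 0 ≤ B i j) (d : Fin n → ℝ) (hd : ∀ i, d i = ∑ j, B i j)
    (hdpos : ∀ i, 0 < d i) (A : Matrix (Fin n) (Fin n) ℝ)
    (hA : A = Matrix.diagonal (fun i => (Real.sqrt (d i))⁻¹) * B *
      Matrix.diagonal (fun i => (Real.sqrt (d i))⁻¹))
    (u : Fin n → ℝ) : u ⬝ᵥ (A.mulVec u) ≤ u ⬝ᵥ u := by
  set y : Fin n → ℝ := fun i => u i * (Real.sqrt (d i))⁻¹ with hy
  have hA' : ∀ i j, A i j = (Real.sqrt (d i))⁻¹ * B i j * (Real.sqrt (d j))⁻¹ := by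
    intro i j
    rw [hA]
    simp [Matrix.mul_diagonal, Matrix.diagonal_mul]
  have hsum1 : ∀ i, ∑ j, B i j * y i ^ 2 = d i * y i ^ 2 := by
    intro i
    rw [← Finset.sum_mul, ← hd i]
  have hdy : ∀ i, d i * y i ^ 2 = u i * u i := by
    intro i
    have hs : Real.sqrt (d i) ^ 2 = d i := Real.sq_sqrt (hdpos i).le
    have hne : Real.sqrt (d i) ≠ 0 := (Real.sqrt_pos.mpr (hdpos i)).ne'
    show d i * (u i * (Real.sqrt (d i))⁻¹) ^ 2 = u i * u i
    rw [mul_pow, inv_pow, hs, mul_comm, mul_assoc, inv_mul_cancel₀ (hdpos i).ne', mul_one, sq]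
  calc u ⬝ᵥ A.mulVec u = ∑ i, ∑ j, B i j * (y i * y j) := by
        simp only [dotProduct, Matrix.mulVec, dotProduct, Finset.mul_sum]
        refine Finset.sum_congr rfl fun i _ => Finset.sum_congr rfl fun j _ => ?_
        rw [hA' i j, hy]
        ring
    _ ≤ ∑ i, ∑ j, (B i j * y i ^ 2 / 2 + B i j * y j ^ 2 / 2) := by
        refine Finset.sum_le_sum fun i _ => Finset.sum_le_sum fun j _ => ?_
        nlinarith [mul_nonneg (hBnn i j) (sq_nonneg (y i - y j))]
    _ = (∑ i, ∑ j, B i j * y i ^ 2) / 2 + (∑ i, ∑ j, B i j * y j ^ 2) / 2 := by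
        simp only [Finset.sum_add_distrib, Finset.sum_div]
    _ = ∑ i, u i * u i := by
        have hswap : ∑ i, ∑ j, B i j * y j ^ 2 = ∑ i, ∑ j, B i j * y i ^ 2 := by
          rw [Finset.sum_comm]
          refine Finset.sum_congr rfl fun i _ => Finset.sum_congr rfl fun j _ => ?_
          rw [hBsymm.apply i j]
        rw [hswap]
        simp only [hsum1, hdy]
        ring
    _ = u ⬝ᵥ u := rfl

lemma Ypart_orthonormal {n k : ℕ} (d : Fin n → ℝ) (p : Fin n → Fin k)
    (hdpos : ∀ i, 0 < d i) (hp : Function.Surjective p) :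
    (Ypart d p)ᵀ * Ypart d p = 1 := by
  ext ℓ ℓ'
  rw [Matrix.mul_apply]
  simp only [Matrix.transpose_apply, Ypart]
  by_cases h : ℓ = ℓ'
  · subst h
    have hvol : 0 < partVol d p ℓ := by
      obtain ⟨i0, hi0⟩ := hp ℓ
      refine Finset.sum_pos' (fun i _ => (hdpos i).le) ⟨i0, ?_, hdpos i0⟩
      simp [hi0]
    rw [Matrix.one_apply_eq]
    have hterm : ∀ i : Fin n,
        (if ℓ = p i then Real.sqrt (d i / partVol d p (p i)) else 0) *
          (if ℓ = p i then Real.sqrt (d i / partVol d p (p i)) else 0) =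
        if p i = ℓ then d i / partVol d p ℓ else 0 := by
      intro i
      by_cases hpi : p i = ℓ
      · rw [if_pos hpi.symm, if_pos hpi, ← hpi,
          Real.mul_self_sqrt (div_nonneg (hdpos i).le ?_)]
        rw [hpi]
        exact hvol.le
      · rw [if_neg (fun he => hpi he.symm), if_neg hpi, mul_zero]
    rw [Finset.sum_congr rfl fun i _ => hterm i, ← Finset.sum_filter,
      ← Finset.sum_div]
    exact div_self hvol.ne'
  · rw [Matrix.one_apply_ne h]
    refine Finset.sum_eq_zero fun i _ => ?_
    by_cases h1 : ℓ = p i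
    · rw [if_neg (fun he : ℓ' = p i => h (h1.trans he.symm)), mul_zero]
    · rw [if_neg h1, zero_mul]

lemma perm_conj {k : ℕ} (V₀ M : Matrix (Fin k) (Fin k) ℝ) (σ : Equiv.Perm (Fin k)) :
    ((V₀.submatrix id ⇑σ)ᵀ * M * (V₀.submatrix id ⇑σ)) = (V₀ᵀ * M * V₀).submatrix ⇑σ ⇑σ := by
  ext a b
  simp [Matrix.mul_apply, Matrix.submatrix_apply, Matrix.transpose_apply]

lemma conj_diag {m : ℕ} (U D X : Matrix (Fin m) (Fin m) ℝ) (hU : Uᵀ * U = 1)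
    (hX : X = U * D * Uᵀ) : Uᵀ * X * U = D := by
  rw [hX, Matrix.mul_assoc U D Uᵀ, ← Matrix.mul_assoc Uᵀ U (D * Uᵀ), hU, Matrix.one_mul,
    Matrix.mul_assoc D Uᵀ U, hU, Matrix.mul_one]

lemma frob_eq_sum_sq {k : ℕ} (M V : Matrix (Fin k) (Fin k) ℝ) (θ : Fin k → ℝ)
    (hV : Vᵀ * V = 1) (hVMV : Vᵀ * M * V = Matrix.diagonal θ) :
    ∑ i, ∑ j, M i j ^ 2 = ∑ ν, θ ν ^ 2 := by
  have hVVT : V * Vᵀ = 1 := mul_eq_one_comm.mp hV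
  have e1 : (Vᵀ * M * V)ᵀ * (Vᵀ * M * V) = Vᵀ * (Mᵀ * M) * V := by
    rw [Matrix.transpose_mul, Matrix.transpose_mul, Matrix.transpose_transpose]
    calc Vᵀ * (Mᵀ * V) * (Vᵀ * M * V)
        = Vᵀ * (Mᵀ * V) * (Vᵀ * (M * V)) := by
          rw [Matrix.mul_assoc Vᵀ M V]
      _ = Vᵀ * Mᵀ * ((V * Vᵀ) * (M * V)) := by
          rw [← Matrix.mul_assoc Vᵀ Mᵀ V, Matrix.mul_assoc (Vᵀ * Mᵀ) V _,
            ← Matrix.mul_assoc V Vᵀ (M * V)]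
      _ = Vᵀ * (Mᵀ * M) * V := by
          rw [hVVT, Matrix.one_mul, ← Matrix.mul_assoc, Matrix.mul_assoc Vᵀ Mᵀ M]
  have e2 : Matrix.trace ((Vᵀ * M * V)ᵀ * (Vᵀ * M * V)) = Matrix.trace (Mᵀ * M) := by
    rw [e1, Matrix.trace_mul_cycle, ← Matrix.mul_assoc, hVVT, Matrix.one_mul]
  have e3 : Matrix.trace ((Vᵀ * M * V)ᵀ * (Vᵀ * M * V)) = ∑ ν, θ ν ^ 2 := by
    rw [hVMV, Matrix.diagonal_transpose, Matrix.diagonal_mul_diagonal, Matrix.trace_diagonal]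
    exact Finset.sum_congr rfl fun ν _ => (sq (θ ν)).symm
  have e4 : Matrix.trace (Mᵀ * M) = ∑ i, ∑ j, M i j ^ 2 := by
    rw [Matrix.trace]
    simp only [Matrix.diag_apply, Matrix.mul_apply, Matrix.transpose_apply]
    rw [Finset.sum_comm]
    exact Finset.sum_congr rfl fun i _ => Finset.sum_congr rfl fun j _ => (sq (M i j)).symm
  rw [← e4, ← e2, e3]

end Aux

/-- Cheeger inequality for `Ψcut`: for every `k`-partitioning `p`,
`L_k = (∑_{ν=2}^k (1-λ_ν)²)^{1/2} ≤ Ψcut(p) = ‖I_k − Yᵀ A Y‖`; consequently `L_k`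
is a lower bound for the minimum of `Ψcut` over all `k`-partitionings. -/
theorem stmt5 (n k : ℕ) (hn : 0 < n) (hk : 0 < k) (hkn : k ≤ n)
    (B : Matrix (Fin n) (Fin n) ℝ) (hBsymm : B.IsSymm)
    (hBnn : ∀ i j, 0 ≤ B i j) (hBdiag : ∀ i, B i i = 0)
    (d : Fin n → ℝ) (hd : ∀ i, d i = ∑ j, B i j) (hdpos : ∀ i, 0 < d i)
    (A : Matrix (Fin n) (Fin n) ℝ)
    (hA : A = Matrix.diagonal (fun i => (Real.sqrt (d i))⁻¹) * B *
      Matrix.diagonal (fun i => (Real.sqrt (d i))⁻¹))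
    (lam : Fin n → ℝ) (hmono : ∀ i j : Fin n, i ≤ j → lam j ≤ lam i)
    (U : Matrix (Fin n) (Fin n) ℝ) (hU : Uᵀ * U = 1)
    (hdiag : A = U * Matrix.diagonal lam * Uᵀ)
    (p : Fin n → Fin k) (hp : Function.Surjective p) :
    Real.sqrt (∑ ν : Fin k, if ν.val = 0 then 0
        else (1 - lam (Fin.castLE hkn ν)) ^ 2) ≤
      frobNorm ((1 : Matrix (Fin k) (Fin k) ℝ) - (Ypart d p)ᵀ * A * Ypart d p) := by
  classical
  set Y := Ypart d p with hY
  have hYY : Yᵀ * Y = 1 := Ypart_orthonormal d p hdpos hp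
  -- all eigenvalues are at most 1
  have hAU : A * U = U * Matrix.diagonal lam := by
    rw [hdiag, Matrix.mul_assoc (U * Matrix.diagonal lam) Uᵀ U, hU, Matrix.mul_one]
  have hlam1 : ∀ ν, lam ν ≤ 1 := by
    intro ν
    set u : Fin n → ℝ := fun i => U i ν with hu
    have huu : u ⬝ᵥ u = 1 := by
      have h1 := congrFun (congrFun hU ν) ν
      rw [Matrix.mul_apply] at h1
      simpa [Matrix.transpose_apply, Matrix.one_apply_eq, dotProduct, hu] using h1
    have hAu : A.mulVec u = fun i => lam ν * u i := by
      funext i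
      have h1 := congrFun (congrFun hAU i) ν
      rw [Matrix.mul_apply, Matrix.mul_apply] at h1
      simp only [Matrix.diagonal_apply, Finset.sum_ite_eq', Finset.mem_univ, if_true] at h1
      simpa [Matrix.mulVec, dotProduct, hu, mul_comm] using h1
    have hq := quad_le_one B hBsymm hBnn d hd hdpos A hA u
    rw [hAu] at hq
    have heq : u ⬝ᵥ (fun i => lam ν * u i) = lam ν := by
      have h2 : u ⬝ᵥ (fun i => lam ν * u i) = lam ν * (u ⬝ᵥ u) := by
        simp only [dotProduct, Finset.mul_sum]
        exact Finset.sum_congr rfl fun i _ => by ring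
      rw [h2, huu, mul_one]
    rw [heq, huu] at hq
    exact hq
  -- the matrix N = 1 - A
  set N : Matrix (Fin n) (Fin n) ℝ := 1 - A with hN
  have hUAU : Uᵀ * A * U = Matrix.diagonal lam := conj_diag U (Matrix.diagonal lam) A hU hdiag
  have hUNU : Uᵀ * N * U = Matrix.diagonal (fun ν => 1 - lam ν) := by
    have hdd : Matrix.diagonal (fun ν : Fin n => 1 - lam ν) = 1 - Matrix.diagonal lam := by
      ext a b
      by_cases hab : a = b
      · subst hab; simp [Matrix.diagonal_apply_eq, Matrix.one_apply_eq]
      · simp [Matrix.diagonal_apply_ne _ hab, Matrix.one_apply_ne hab]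
    rw [hN, mul_sub, sub_mul, mul_one, hU, hUAU, hdd]
  set M : Matrix (Fin k) (Fin k) ℝ := 1 - Yᵀ * A * Y with hM
  have hYNY : Yᵀ * N * Y = M := by
    rw [hN, Matrix.mul_sub, Matrix.sub_mul, Matrix.mul_one, hYY, hM]
  -- symmetry
  have hAsymm : Aᵀ = A := by
    rw [hdiag]
    simp [Matrix.transpose_mul, Matrix.diagonal_transpose, Matrix.mul_assoc]
  have hMsymm : Mᵀ = M := by
    rw [hM]
    simp [Matrix.transpose_sub, Matrix.transpose_mul, Matrix.transpose_transpose,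
      hAsymm, Matrix.mul_assoc]
  -- spectral theorem for M
  have hMherm : M.IsHermitian := by
    rw [Matrix.IsHermitian, Matrix.conjTranspose_eq_transpose_of_trivial, hMsymm]
  set θ₀ : Fin k → ℝ := hMherm.eigenvalues with hθ₀
  set V₀ : Matrix (Fin k) (Fin k) ℝ := (hMherm.eigenvectorUnitary : Matrix (Fin k) (Fin k) ℝ)
    with hV₀
  have hspec : M = V₀ * Matrix.diagonal θ₀ * V₀ᵀ := by
    have h := hMherm.spectral_theorem
    simpa [Matrix.star_eq_conjTranspose, Matrix.conjTranspose_eq_transpose_of_trivial,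
      Function.comp] using h
  have hV₀V : V₀ᵀ * V₀ = 1 := by
    have h := (Unitary.mem_iff.mp hMherm.eigenvectorUnitary.2).1
    rw [Matrix.star_eq_conjTranspose, Matrix.conjTranspose_eq_transpose_of_trivial] at h
    exact h
  -- sort the eigenvalues
  set σ : Equiv.Perm (Fin k) := Tuple.sort θ₀ with hσ
  set θ : Fin k → ℝ := θ₀ ∘ σ with hθ
  have hθmono : Monotone θ := Tuple.monotone_sort θ₀
  set V : Matrix (Fin k) (Fin k) ℝ := V₀.submatrix id ⇑σ with hV
  have hV₀MV₀ : V₀ᵀ * M * V₀ = Matrix.diagonal θ₀ :=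
    conj_diag V₀ (Matrix.diagonal θ₀) M hV₀V hspec
  have hVMV : Vᵀ * M * V = Matrix.diagonal θ := by
    rw [hV, perm_conj, hV₀MV₀, Matrix.submatrix_diagonal_equiv]
  have hVV : Vᵀ * V = 1 := by
    have h := perm_conj V₀ 1 σ
    rw [Matrix.mul_one, Matrix.mul_one] at h
    rw [hV, h, hV₀V, Matrix.submatrix_one_equiv]
  -- W = Y * V has orthonormal columns
  set W : Matrix (Fin n) (Fin k) ℝ := Y * V with hW
  have hWW : Wᵀ * W = 1 := by
    rw [hW, Matrix.transpose_mul, Matrix.mul_assoc Vᵀ Yᵀ (Y * V),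
      ← Matrix.mul_assoc Yᵀ Y V, hYY, Matrix.one_mul, hVV]
  have hWNW : Wᵀ * N * W = Matrix.diagonal θ := by
    rw [hW, Matrix.transpose_mul]
    have hassoc : Vᵀ * Yᵀ * N * (Y * V) = Vᵀ * (Yᵀ * N * Y) * V := by
      rw [Matrix.mul_assoc Vᵀ Yᵀ N, Matrix.mul_assoc Vᵀ (Yᵀ * N) (Y * V),
        ← Matrix.mul_assoc (Yᵀ * N) Y V, ← Matrix.mul_assoc Vᵀ (Yᵀ * N * Y) V]
    rw [hassoc, hYNY, hVMV]
  -- interlacing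
  have hmono' : Monotone (fun ν : Fin n => 1 - lam ν) := fun a b hab => by
    have := hmono a b hab
    simp only [sub_le_sub_iff_left]
    exact this
  have hinter : ∀ i : Fin k, 1 - lam (Fin.castLE hkn i) ≤ θ i := fun i =>
    interlace_s5 hkn N U (fun ν => 1 - lam ν) hmono' hU hUNU W hWW θ hθmono hWNW i
  -- conclude
  have hfrob : ∑ i, ∑ j, M i j ^ 2 = ∑ ν, θ ν ^ 2 := frob_eq_sum_sq M V θ hVV hVMV
  show Real.sqrt _ ≤ frobNorm M
  rw [frobNorm, hfrob]
  apply Real.sqrt_le_sqrt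
  refine Finset.sum_le_sum fun ν _ => ?_
  by_cases hν : ν.val = 0
  · rw [if_pos hν]
    exact sq_nonneg _
  · rw [if_neg hν]
    have h0 : 0 ≤ 1 - lam (Fin.castLE hkn ν) := sub_nonneg.mpr (hlam1 _)
    exact pow_le_pow_left₀ h0 (hinter ν) 2
end

section
/- Let p be a surjective map {1,…,n} → {1,…,k}. There exists a nonnegative orthonormal indicator matrix Φ for p with I_k − ΦᵀAΦ = 0 if and only if B_{ij} = 0 whenever p(i) ≠ p(j); consequently Φcut_G = min over all surjective p and all nonnegative orthonormal indicator matrices Φ of ‖I_k − ΦᵀAΦ‖ equals 0 if and only if the graph is k-partitionable (Φcut is a cut function). -/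
open Matrix

/-- `Φ` is a nonnegative orthonormal indicator matrix for the map `p`:
`Φᵀ Φ = I_k`, `Φ i ℓ > 0` when `ℓ = p i`, and `Φ i ℓ = 0` when `ℓ ≠ p i`. -/
def IsIndicatorFor {n k : ℕ} (Φ : Matrix (Fin n) (Fin k) ℝ) (p : Fin n → Fin k) : Prop :=
  Φᵀ * Φ = 1 ∧ (∀ i, 0 < Φ i (p i)) ∧ ∀ i ℓ, ℓ ≠ p i → Φ i ℓ = 0

lemma frobNorm_eq_zero_iff {m l : Type*} [Fintype m] [Fintype l] (M : Matrix m l ℝ) :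
    frobNorm M = 0 ↔ M = 0 := by
  unfold frobNorm
  rw [Real.sqrt_eq_zero (by positivity)]
  constructor
  · intro h
    ext i j
    have h1 := (Finset.sum_eq_zero_iff_of_nonneg
      (fun a _ => Finset.sum_nonneg fun b _ => sq_nonneg _)).mp h i (Finset.mem_univ i)
    have h2 := (Finset.sum_eq_zero_iff_of_nonneg
      (fun b _ => sq_nonneg _)).mp h1 j (Finset.mem_univ j)
    simpa using (pow_eq_zero_iff two_ne_zero).mp h2
  · intro h; simp [h]

lemma key_iff (n k : ℕ)
    (B : Matrix (Fin n) (Fin n) ℝ) (hBsymm : B.IsSymm)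
    (hBnn : ∀ i j, 0 ≤ B i j)
    (d : Fin n → ℝ) (hd : ∀ i, d i = ∑ j, B i j) (hdpos : ∀ i, 0 < d i)
    (A : Matrix (Fin n) (Fin n) ℝ)
    (hA : A = Matrix.diagonal (fun i => (Real.sqrt (d i))⁻¹) * B *
      Matrix.diagonal (fun i => (Real.sqrt (d i))⁻¹))
    (p : Fin n → Fin k) (hp : Function.Surjective p) :
    (∃ Φ : Matrix (Fin n) (Fin k) ℝ, IsIndicatorFor Φ p ∧
        (1 : Matrix (Fin k) (Fin k) ℝ) - Φᵀ * A * Φ = 0) ↔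
      ∀ i j, p i ≠ p j → B i j = 0 := by
  have hAe : ∀ a b, A a b = (Real.sqrt (d a))⁻¹ * B a b * (Real.sqrt (d b))⁻¹ := by
    intro a b
    simp [hA, Matrix.diagonal_mul, Matrix.mul_diagonal]
  have hBs : ∀ a b, B a b = B b a := fun a b => (hBsymm.apply a b).symm
  have hcol : ∀ b, ∑ a, B a b = d b := by
    intro b
    rw [hd b]
    exact Finset.sum_congr rfl fun a _ => hBs a b
  have hsq : ∀ a, Real.sqrt (d a) ≠ 0 := fun a => ne_of_gt (Real.sqrt_pos.mpr (hdpos a))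
  have hentry : ∀ (Ψ : Matrix (Fin n) (Fin k) ℝ) (ℓ m : Fin k),
      (Ψᵀ * A * Ψ) ℓ m = ∑ b, ∑ a, Ψ a ℓ * A a b * Ψ b m := by
    intro Ψ ℓ m
    simp [Matrix.mul_apply, Matrix.transpose_apply, Finset.sum_mul, mul_assoc]
  constructor
  · rintro ⟨Φ, ⟨hortho, hpos, hzero⟩, heq⟩ i j hpij
    have hM : Φᵀ * A * Φ = 1 := by
      have := sub_eq_zero.mp heq
      exact this.symm
    set ℓ := p i with hℓ
    set y : Fin n → ℝ := fun a => Φ a ℓ * (Real.sqrt (d a))⁻¹ with hy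
    -- ∑ d a * y a ^2 = 1
    have h1 : ∑ a, d a * y a ^ 2 = 1 := by
      have := congrFun (congrFun hortho ℓ) ℓ
      simp only [Matrix.mul_apply, Matrix.transpose_apply, Matrix.one_apply_eq] at this
      rw [← this]
      refine Finset.sum_congr rfl fun a _ => ?_
      have hda : Real.sqrt (d a) ^ 2 = d a := Real.sq_sqrt (hdpos a).le
      rw [hy]
      simp only
      rw [mul_pow, inv_pow, hda, mul_comm (d a), mul_assoc,
        inv_mul_cancel₀ (ne_of_gt (hdpos a)), mul_one, sq]
    -- ∑∑ B a b * y a * y b = 1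
    have h2 : ∑ a, ∑ b, B a b * y a * y b = 1 := by
      have := congrFun (congrFun hM ℓ) ℓ
      rw [hentry Φ ℓ ℓ, Matrix.one_apply_eq] at this
      rw [Finset.sum_comm] at this
      rw [← this]
      refine Finset.sum_congr rfl fun a _ => Finset.sum_congr rfl fun b _ => ?_
      rw [hAe a b, hy]
      ring
    have key : ∑ a, ∑ b, B a b * (y a - y b) ^ 2 = 0 := by
      have expand : ∀ a b : Fin n, B a b * (y a - y b) ^ 2 =
          B a b * y a ^ 2 + B a b * y b ^ 2 - 2 * (B a b * y a * y b) := by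
        intro a b; ring
      have T1 : ∑ a, ∑ b, B a b * y a ^ 2 = 1 := by
        rw [← h1]
        refine Finset.sum_congr rfl fun a _ => ?_
        rw [← Finset.sum_mul, ← hd a]
      have T2 : ∑ a, ∑ b, B a b * y b ^ 2 = 1 := by
        rw [Finset.sum_comm, ← h1]
        refine Finset.sum_congr rfl fun b _ => ?_
        rw [← Finset.sum_mul, hcol b]
      calc ∑ a, ∑ b, B a b * (y a - y b) ^ 2
          = ∑ a, ∑ b, (B a b * y a ^ 2 + B a b * y b ^ 2 - 2 * (B a b * y a * y b)) := by
            simp_rw [expand]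
        _ = (∑ a, ∑ b, B a b * y a ^ 2) + (∑ a, ∑ b, B a b * y b ^ 2)
              - 2 * (∑ a, ∑ b, B a b * y a * y b) := by
            rw [Finset.mul_sum]
            simp_rw [Finset.mul_sum]
            rw [← Finset.sum_add_distrib, ← Finset.sum_sub_distrib]
            refine Finset.sum_congr rfl fun a _ => ?_
            rw [← Finset.sum_add_distrib, ← Finset.sum_sub_distrib]
        _ = 0 := by rw [T1, T2, h2]; ring
    have hterm : B i j * (y i - y j) ^ 2 = 0 := by
      have hnn : ∀ a ∈ Finset.univ, (0:ℝ) ≤ ∑ b, B a b * (y a - y b) ^ 2 :=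
        fun a _ => Finset.sum_nonneg fun b _ => mul_nonneg (hBnn a b) (sq_nonneg _)
      have h3 := (Finset.sum_eq_zero_iff_of_nonneg hnn).mp key i (Finset.mem_univ i)
      exact (Finset.sum_eq_zero_iff_of_nonneg
        (fun b _ => mul_nonneg (hBnn i b) (sq_nonneg _))).mp h3 j (Finset.mem_univ j)
    have hyj : y j = 0 := by
      rw [hy]; simp only
      rw [hzero j ℓ (by rw [hℓ]; exact hpij)]
      ring
    have hyi : 0 < y i := by
      rw [hy]; simp only
      exact mul_pos (hpos i) (inv_pos.mpr (Real.sqrt_pos.mpr (hdpos i)))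
    rcases mul_eq_zero.mp hterm with h | h
    · exact h
    · exfalso
      have : y i - y j ≠ 0 := by rw [hyj]; simpa using ne_of_gt hyi
      exact this (pow_eq_zero_iff two_ne_zero |>.mp h)
  · intro hB
    set s : Fin k → ℝ := fun ℓ => ∑ a, if p a = ℓ then d a else 0 with hs
    have hspos : ∀ ℓ, 0 < s ℓ := by
      intro ℓ
      obtain ⟨a, ha⟩ := hp ℓ
      have h1 : ∀ b ∈ Finset.univ, (0:ℝ) ≤ if p b = ℓ then d b else 0 := by
        intro b _; split_ifs; exacts [(hdpos b).le, le_rfl]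
      have h2 := Finset.single_le_sum h1 (Finset.mem_univ a)
      rw [if_pos ha] at h2
      exact lt_of_lt_of_le (hdpos a) h2
    set Φ : Matrix (Fin n) (Fin k) ℝ :=
      fun a ℓ => if p a = ℓ then Real.sqrt (d a) / Real.sqrt (s ℓ) else 0 with hΦ
    have hsums : ∀ ℓ, ∑ a, (if p a = ℓ then d a else 0) / s ℓ = 1 := by
      intro ℓ
      rw [← Finset.sum_div]
      exact div_self (ne_of_gt (hspos ℓ))
    have hortho : Φᵀ * Φ = 1 := by
      ext ℓ m
      simp only [Matrix.mul_apply, Matrix.transpose_apply]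
      rcases eq_or_ne ℓ m with rfl | hlm
      · rw [Matrix.one_apply_eq, ← hsums ℓ]
        refine Finset.sum_congr rfl fun a _ => ?_
        rw [hΦ]; simp only
        split_ifs with h
        · rw [div_mul_div_comm, Real.mul_self_sqrt (hdpos a).le,
            Real.mul_self_sqrt (hspos ℓ).le]
        · ring
      · rw [Matrix.one_apply_ne hlm]
        refine Finset.sum_eq_zero fun a _ => ?_
        rw [hΦ]; simp only
        split_ifs with h1 h2
        · exact absurd (h1 ▸ h2) hlm
        · ring
        · ring
        · ring
    refine ⟨Φ, ⟨hortho, ?_, ?_⟩, ?_⟩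
    · intro i
      rw [hΦ]; simp only [if_pos rfl]
      exact div_pos (Real.sqrt_pos.mpr (hdpos i)) (Real.sqrt_pos.mpr (hspos (p i)))
    · intro i ℓ hℓ
      rw [hΦ]; simp only
      rw [if_neg (Ne.symm hℓ)]
    · rw [sub_eq_zero]
      symm
      ext ℓ m
      rw [hentry Φ ℓ m]
      rcases eq_or_ne ℓ m with rfl | hlm
      · rw [Matrix.one_apply_eq]
        have hterm : ∀ a b : Fin n, Φ a ℓ * A a b * Φ b ℓ =
            if p b = ℓ then B a b / s ℓ else 0 := by
          intro a b
          rw [hΦ]; simp only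
          rw [hAe a b]
          split_ifs with h1 h2 h2
          · have gen : ∀ (x z w c : ℝ), x ≠ 0 → z ≠ 0 → w ≠ 0 →
                x / w * (x⁻¹ * c * z⁻¹) * (z / w) = c / (w * w) := by
              intro x z w c hx hz hw
              field_simp
            rw [gen _ _ _ _ (hsq a) (hsq b) (ne_of_gt (Real.sqrt_pos.mpr (hspos ℓ))),
              Real.mul_self_sqrt (hspos ℓ).le]
          · ring
          · rw [hB a b (by rw [h2]; exact fun hc => h1 hc)]
            simp
          · ring
        calc ∑ b, ∑ a, Φ a ℓ * A a b * Φ b ℓ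
            = ∑ b, if p b = ℓ then (∑ a, B a b) / s ℓ else 0 := by
              refine Finset.sum_congr rfl fun b _ => ?_
              simp_rw [hterm]
              split_ifs with h
              · rw [Finset.sum_div]
              · exact Finset.sum_const_zero
          _ = ∑ b, (if p b = ℓ then d b else 0) / s ℓ := by
              refine Finset.sum_congr rfl fun b _ => ?_
              split_ifs with h
              · rw [hcol b]
              · rw [zero_div]
          _ = 1 := hsums ℓ
      · rw [Matrix.one_apply_ne hlm]
        refine Finset.sum_eq_zero fun b _ => Finset.sum_eq_zero fun a _ => ?_
        rw [hΦ]; simp only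
        rw [hAe a b]
        split_ifs with h1 h2
        · rw [hB a b (by rw [h1, h2]; exact hlm)]
          ring
        · ring
        · ring
        · ring

/-- For a surjective `p`, there is a nonnegative orthonormal indicator matrix `Φ` for
`p` with `I_k − Φᵀ A Φ = 0` iff `B_{ij} = 0` whenever `p i ≠ p j`; consequently
`Φcut_G = 0` iff the graph is `k`-partitionable, i.e. `Φcut` is a cut function. -/
theorem stmt12 (n k : ℕ) (hn : 0 < n) (hk : 0 < k) (hkn : k ≤ n)
    (B : Matrix (Fin n) (Fin n) ℝ) (hBsymm : B.IsSymm)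
    (hBnn : ∀ i j, 0 ≤ B i j) (hBdiag : ∀ i, B i i = 0)
    (d : Fin n → ℝ) (hd : ∀ i, d i = ∑ j, B i j) (hdpos : ∀ i, 0 < d i)
    (A : Matrix (Fin n) (Fin n) ℝ)
    (hA : A = Matrix.diagonal (fun i => (Real.sqrt (d i))⁻¹) * B *
      Matrix.diagonal (fun i => (Real.sqrt (d i))⁻¹)) :
    (∀ p : Fin n → Fin k, Function.Surjective p →
      ((∃ Φ : Matrix (Fin n) (Fin k) ℝ, IsIndicatorFor Φ p ∧
          (1 : Matrix (Fin k) (Fin k) ℝ) - Φᵀ * A * Φ = 0) ↔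
        ∀ i j, p i ≠ p j → B i j = 0)) ∧
    ((∃ p : Fin n → Fin k, Function.Surjective p ∧
        ∃ Φ : Matrix (Fin n) (Fin k) ℝ, IsIndicatorFor Φ p ∧
          frobNorm ((1 : Matrix (Fin k) (Fin k) ℝ) - Φᵀ * A * Φ) = 0) ↔
      (∃ p : Fin n → Fin k, Function.Surjective p ∧ ∀ i j, p i ≠ p j → B i j = 0)) := by
  have key := key_iff n k B hBsymm hBnn d hd hdpos A hA
  refine ⟨fun p hp => key p hp, ?_⟩
  constructor
  · rintro ⟨p, hp, Φ, hΦ, hfr⟩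
    exact ⟨p, hp, (key p hp).mp ⟨Φ, hΦ, (frobNorm_eq_zero_iff _).mp hfr⟩⟩
  · rintro ⟨p, hp, hB⟩
    obtain ⟨Φ, hΦ, h0⟩ := (key p hp).mpr hB
    exact ⟨p, hp, Φ, hΦ, by rw [h0]; simp [frobNorm]⟩
end

section
/- (Key lemma in the proof of Theorem 1.) Let Φ be a nonnegative orthonormal indicator matrix for a surjective map p, let S = diag(s_1,…,s_k) with 0 < s_i ≤ 1 for all i and s_min = min_i s_i, let Q ∈ ℝ^{k×k} be orthogonal, and set Z = ΦSQᵀ. Then ‖I_k − ZᵀAZ‖ ≥ s_min² · ‖I_k − ΦᵀAΦ‖. -/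
open Matrix

lemma sumsq_eq_trace {k : ℕ} (X : Matrix (Fin k) (Fin k) ℝ) :
    ∑ i, ∑ j, X i j ^ 2 = (X * Xᵀ).trace := by
  simp [Matrix.trace, Matrix.mul_apply, Matrix.diag, sq]

lemma frob_conj {k : ℕ} (Q Y : Matrix (Fin k) (Fin k) ℝ) (hQ : Qᵀ * Q = 1) :
    frobNorm (Q * Y * Qᵀ) = frobNorm Y := by
  unfold frobNorm
  congr 1
  rw [sumsq_eq_trace, sumsq_eq_trace]
  have h1 : (Q * Y * Qᵀ) * (Q * Y * Qᵀ)ᵀ = Q * (Y * Yᵀ) * Qᵀ := by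
    rw [Matrix.transpose_mul, Matrix.transpose_mul, Matrix.transpose_transpose]
    calc Q * Y * Qᵀ * (Q * (Yᵀ * Qᵀ)) = Q * Y * (Qᵀ * Q) * (Yᵀ * Qᵀ) := by
          simp only [Matrix.mul_assoc]
      _ = Q * (Y * Yᵀ) * Qᵀ := by rw [hQ]; simp only [Matrix.mul_one, Matrix.mul_assoc]
  rw [h1, Matrix.trace_mul_cycle, ← Matrix.mul_assoc, hQ, Matrix.one_mul]

set_option maxHeartbeats 1000000 in
/-- Key lemma in the proof of Theorem 1: with `Z = Φ S Qᵀ`, where `Φ` is a nonnegative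
orthonormal indicator matrix, `S = diag(s)` with `0 < s_i ≤ 1`, `s_min = min_i s_i`,
and `Q` orthogonal, one has `‖I_k − Zᵀ A Z‖ ≥ s_min² ‖I_k − Φᵀ A Φ‖`. -/
theorem stmt14 (n k : ℕ) (hn : 0 < n) (hk : 0 < k) (hkn : k ≤ n)
    (B : Matrix (Fin n) (Fin n) ℝ) (hBsymm : B.IsSymm)
    (hBnn : ∀ i j, 0 ≤ B i j) (hBdiag : ∀ i, B i i = 0)
    (d : Fin n → ℝ) (hd : ∀ i, d i = ∑ j, B i j) (hdpos : ∀ i, 0 < d i)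
    (A : Matrix (Fin n) (Fin n) ℝ)
    (hA : A = Matrix.diagonal (fun i => (Real.sqrt (d i))⁻¹) * B *
      Matrix.diagonal (fun i => (Real.sqrt (d i))⁻¹))
    (p : Fin n → Fin k) (hp : Function.Surjective p)
    (Φ : Matrix (Fin n) (Fin k) ℝ) (hΦ : IsIndicatorFor Φ p)
    (s : Fin k → ℝ) (hs0 : ∀ i, 0 < s i) (hs1 : ∀ i, s i ≤ 1)
    (smin : ℝ) (hsmin : IsLeast (Set.range s) smin)
    (Q : Matrix (Fin k) (Fin k) ℝ) (hQ : Qᵀ * Q = 1)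
    (Z : Matrix (Fin n) (Fin k) ℝ) (hZ : Z = Φ * Matrix.diagonal s * Qᵀ) :
    smin ^ 2 * frobNorm ((1 : Matrix (Fin k) (Fin k) ℝ) - Φᵀ * A * Φ) ≤
      frobNorm ((1 : Matrix (Fin k) (Fin k) ℝ) - Zᵀ * A * Z) := by
  obtain ⟨hΦorth, hΦpos, hΦzero⟩ := hΦ
  obtain ⟨⟨i0, hi0⟩, hlb⟩ := hsmin
  have hsminpos : 0 < smin := hi0 ▸ hs0 i0
  have hsmin1 : smin ≤ 1 := hi0 ▸ hs1 i0
  have hsminle : ∀ i, smin ≤ s i := fun i => hlb ⟨i, rfl⟩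
  set M : Matrix (Fin k) (Fin k) ℝ := Φᵀ * A * Φ with hMdef
  -- entries of A
  have hAentry : ∀ a b, A a b = (Real.sqrt (d a))⁻¹ * B a b * (Real.sqrt (d b))⁻¹ := by
    intro a b
    rw [hA]
    simp [Matrix.mul_apply, Matrix.diagonal, Finset.sum_ite_eq, Finset.sum_ite_eq',
      Matrix.mul_diagonal, Matrix.diagonal_mul]
  have hAnn : ∀ a b, 0 ≤ A a b := by
    intro a b
    rw [hAentry]
    exact mul_nonneg (mul_nonneg (inv_nonneg.2 (Real.sqrt_nonneg _)) (hBnn a b))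
      (inv_nonneg.2 (Real.sqrt_nonneg _))
  have hΦnn : ∀ a l, 0 ≤ Φ a l := by
    intro a l
    by_cases h : l = p a
    · rw [h]; exact (hΦpos a).le
    · exact (hΦzero a l h).ge
  have hMentry : ∀ i j, M i j = ∑ a, ∑ b, Φ a i * A a b * Φ b j := by
    intro i j
    rw [hMdef]
    simp only [Matrix.mul_apply, Matrix.transpose_apply, Finset.sum_mul]
    exact Finset.sum_comm
  have hMnn : ∀ i j, 0 ≤ M i j := by
    intro i j
    rw [hMentry]
    apply Finset.sum_nonneg; intro a _
    apply Finset.sum_nonneg; intro b _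
    exact mul_nonneg (mul_nonneg (hΦnn a i) (hAnn a b)) (hΦnn b j)
  -- diagonal of M is ≤ 1
  have hMdiag : ∀ i, M i i ≤ 1 := by
    intro i
    set x : Fin n → ℝ := fun a => Φ a i with hx
    have hxsum : ∑ a, x a ^ 2 = 1 := by
      have := congrFun (congrFun hΦorth i) i
      simpa [Matrix.mul_apply, Matrix.one_apply, sq] using this
    have hterm : ∀ a b, x a * A a b * x b ≤
        B a b * (x a ^ 2 * (d a)⁻¹ + x b ^ 2 * (d b)⁻¹) / 2 := by
      intro a b
      set u : ℝ := x a * (Real.sqrt (d a))⁻¹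
      set v : ℝ := x b * (Real.sqrt (d b))⁻¹
      have hu2 : u ^ 2 = x a ^ 2 * (d a)⁻¹ := by
        simp only [u, mul_pow, ← Real.sqrt_inv]
        rw [Real.sq_sqrt (inv_nonneg.2 (hdpos a).le)]
      have hv2 : v ^ 2 = x b ^ 2 * (d b)⁻¹ := by
        simp only [v, mul_pow, ← Real.sqrt_inv]
        rw [Real.sq_sqrt (inv_nonneg.2 (hdpos b).le)]
      have heq : x a * A a b * x b = B a b * (u * v) := by
        rw [hAentry]; simp only [u, v]; ring
      rw [heq, ← hu2, ← hv2]
      nlinarith [sq_nonneg (u - v), hBnn a b, mul_nonneg (hBnn a b) (sq_nonneg (u - v))]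
    have hsum1 : ∑ a, ∑ b, B a b * (x a ^ 2 * (d a)⁻¹) = ∑ a, x a ^ 2 := by
      refine Finset.sum_congr rfl fun a _ => ?_
      rw [← Finset.sum_mul, ← hd a, mul_comm, mul_assoc,
        inv_mul_cancel₀ (hdpos a).ne', mul_one]
    have hsum2 : ∑ a, ∑ b, B a b * (x b ^ 2 * (d b)⁻¹) = ∑ a, x a ^ 2 := by
      rw [Finset.sum_comm]
      refine Finset.sum_congr rfl fun b _ => ?_
      rw [← Finset.sum_mul]
      have h1 : ∑ a, B a b = d b := by
        rw [hd b]
        exact Finset.sum_congr rfl fun a _ => hBsymm.apply b a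
      rw [h1, mul_comm, mul_assoc, inv_mul_cancel₀ (hdpos b).ne', mul_one]
    calc M i i = ∑ a, ∑ b, x a * A a b * x b := hMentry i i
      _ ≤ ∑ a, ∑ b, B a b * (x a ^ 2 * (d a)⁻¹ + x b ^ 2 * (d b)⁻¹) / 2 := by
          apply Finset.sum_le_sum; intro a _
          apply Finset.sum_le_sum; intro b _
          exact hterm a b
      _ = (∑ a, ∑ b, B a b * (x a ^ 2 * (d a)⁻¹)
            + ∑ a, ∑ b, B a b * (x b ^ 2 * (d b)⁻¹)) / 2 := by
          rw [← Finset.sum_add_distrib, Finset.sum_div]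
          refine Finset.sum_congr rfl fun a _ => ?_
          rw [← Finset.sum_add_distrib, Finset.sum_div]
          refine Finset.sum_congr rfl fun b _ => ?_
          ring
      _ = ∑ a, x a ^ 2 := by rw [hsum1, hsum2]; ring
      _ = 1 := hxsum
  -- rewrite 1 - ZᵀAZ
  have hQQ : Q * Qᵀ = 1 := mul_eq_one_comm.mp hQ
  have hkey : (1 : Matrix (Fin k) (Fin k) ℝ) - Zᵀ * A * Z
      = Q * ((1 : Matrix (Fin k) (Fin k) ℝ) - Matrix.diagonal s * M * Matrix.diagonal s) * Qᵀ := by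
    have hZT : Zᵀ = Q * Matrix.diagonal s * Φᵀ := by
      rw [hZ]
      simp [Matrix.transpose_mul, Matrix.diagonal_transpose, Matrix.mul_assoc]
    rw [Matrix.mul_sub, Matrix.sub_mul, Matrix.mul_one, hQQ, hZT, hZ, hMdef]
    congr 1
    simp only [Matrix.mul_assoc]
  rw [hkey, frob_conj Q _ hQ]
  -- entrywise comparison
  have hYentry : ∀ i j,
      ((1 : Matrix (Fin k) (Fin k) ℝ) - Matrix.diagonal s * M * Matrix.diagonal s) i j
        = (if i = j then (1:ℝ) else 0) - s i * M i j * s j := by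
    intro i j
    simp [Matrix.sub_apply, Matrix.one_apply, Matrix.mul_diagonal, Matrix.diagonal_mul]
  have hWentry : ∀ i j, ((1 : Matrix (Fin k) (Fin k) ℝ) - M) i j
      = (if i = j then (1:ℝ) else 0) - M i j := by
    intro i j
    simp [Matrix.sub_apply, Matrix.one_apply]
  have hentry : ∀ i j,
      (smin ^ 2) ^ 2 * (((1 : Matrix (Fin k) (Fin k) ℝ) - M) i j) ^ 2 ≤
      (((1 : Matrix (Fin k) (Fin k) ℝ) - Matrix.diagonal s * M * Matrix.diagonal s) i j) ^ 2 := by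
    intro i j
    rw [hYentry, hWentry]
    by_cases h : i = j
    · subst h
      rw [if_pos rfl]
      have hM0 := hMnn i i
      have hM1 := hMdiag i
      have hsi1 := hs1 i
      have hsi0 := hs0 i
      have hs2 : (0:ℝ) ≤ 1 - s i * s i := by nlinarith
      have hss : s i * M i i * s i ≤ M i i := by nlinarith [mul_nonneg hM0 hs2]
      have hsm2 : (0:ℝ) ≤ 1 - smin * smin := by nlinarith
      have h2 : smin ^ 2 * (1 - M i i) ≤ 1 - M i i := by
        nlinarith [mul_nonneg (by linarith : (0:ℝ) ≤ 1 - M i i) hsm2]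
      have h3 : 0 ≤ smin ^ 2 * (1 - M i i) := mul_nonneg (sq_nonneg _) (by linarith)
      have hfin : smin ^ 2 * (1 - M i i) ≤ 1 - s i * M i i * s i := by linarith
      nlinarith [pow_le_pow_left₀ h3 hfin 2]
    · rw [if_neg h]
      have hM0 := hMnn i j
      have hi := hsminle i
      have hj := hsminle j
      have h2 : smin ^ 2 * M i j ≤ s i * M i j * s j := by
        nlinarith [mul_nonneg (mul_nonneg (sub_nonneg.2 hi) (sub_nonneg.2 hj)) hM0,
          mul_nonneg (sub_nonneg.2 hi) hM0, mul_nonneg (sub_nonneg.2 hj) hM0, hsminpos.le,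
          mul_nonneg hsminpos.le (mul_nonneg (sub_nonneg.2 hi) hM0),
          mul_nonneg hsminpos.le (mul_nonneg (sub_nonneg.2 hj) hM0)]
      have h3 : 0 ≤ smin ^ 2 * M i j := mul_nonneg (sq_nonneg _) hM0
      nlinarith [pow_le_pow_left₀ h3 h2 2]
  have hsumle : (smin ^ 2) ^ 2 * (∑ i, ∑ j, (((1 : Matrix (Fin k) (Fin k) ℝ) - M) i j) ^ 2)
      ≤ ∑ i, ∑ j,
        (((1 : Matrix (Fin k) (Fin k) ℝ) - Matrix.diagonal s * M * Matrix.diagonal s) i j) ^ 2 := by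
    rw [Finset.mul_sum]
    refine Finset.sum_le_sum fun i _ => ?_
    rw [Finset.mul_sum]
    exact Finset.sum_le_sum fun j _ => hentry i j
  unfold frobNorm
  calc smin ^ 2 * Real.sqrt (∑ i, ∑ j, (((1 : Matrix (Fin k) (Fin k) ℝ) - M) i j) ^ 2)
      = Real.sqrt ((smin ^ 2) ^ 2)
        * Real.sqrt (∑ i, ∑ j, (((1 : Matrix (Fin k) (Fin k) ℝ) - M) i j) ^ 2) := by
        rw [Real.sqrt_sq (sq_nonneg smin)]
    _ = Real.sqrt ((smin ^ 2) ^ 2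
        * ∑ i, ∑ j, (((1 : Matrix (Fin k) (Fin k) ℝ) - M) i j) ^ 2) :=
        (Real.sqrt_mul (sq_nonneg _) _).symm
    _ ≤ Real.sqrt (∑ i, ∑ j,
        (((1 : Matrix (Fin k) (Fin k) ℝ) - Matrix.diagonal s * M * Matrix.diagonal s) i j) ^ 2) :=
        Real.sqrt_le_sqrt hsumle
end

section
/- (Theorem 1, exact non-asymptotic form.) Let X ∈ ℝ^{n×k} have orthonormal columns that are eigenvectors of A corresponding to the k largest eigenvalues λ_1 ≥ ⋯ ≥ λ_k (so that ‖I_k − XᵀAX‖ = L_k, using λ_1 = 1). Let Φ be a nonnegative orthonormal indicator matrix for a surjective map p, let S = diag(s_1,…,s_k) with 0 < s_i ≤ 1 and s_min = min_i s_i, let Q ∈ ℝ^{k×k} be orthogonal, set Z = ΦSQᵀ and Δ = X − Z. Then s_min² · ‖I_k − ΦᵀAΦ‖ ≤ L_k + 2‖ΔᵀAX‖ + ‖ΔᵀAΔ‖. -/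
open Matrix

section Helpers

variable {m l : Type*} [Fintype m] [Fintype l]

lemma frobNorm_eq_norm (M : Matrix m l ℝ) :
    frobNorm M = ‖((WithLp.equiv 2 (m × l → ℝ)).symm (fun p => M p.1 p.2))‖ := by
  rw [EuclideanSpace.norm_eq]
  unfold frobNorm
  congr 1
  rw [Fintype.sum_prod_type]
  simp [sq_abs]

lemma frobNorm_add_le (M N : Matrix m l ℝ) :
    frobNorm (M + N) ≤ frobNorm M + frobNorm N := by
  rw [frobNorm_eq_norm, frobNorm_eq_norm, frobNorm_eq_norm]
  have h : ((WithLp.equiv 2 (m × l → ℝ)).symm (fun p => (M + N) p.1 p.2))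
      = (WithLp.equiv 2 (m × l → ℝ)).symm (fun p => M p.1 p.2)
        + (WithLp.equiv 2 (m × l → ℝ)).symm (fun p => N p.1 p.2) := rfl
  rw [h]
  exact norm_add_le _ _

lemma frobNorm_neg (M : Matrix m l ℝ) : frobNorm (-M) = frobNorm M := by
  unfold frobNorm; simp

lemma frobNorm_sub_le (M N : Matrix m l ℝ) :
    frobNorm (M - N) ≤ frobNorm M + frobNorm N := by
  rw [sub_eq_add_neg]
  calc frobNorm (M + -N) ≤ frobNorm M + frobNorm (-N) := frobNorm_add_le _ _
  _ = frobNorm M + frobNorm N := by rw [frobNorm_neg]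

lemma frobNorm_transpose (M : Matrix m l ℝ) : frobNorm Mᵀ = frobNorm M := by
  unfold frobNorm
  congr 1
  rw [Finset.sum_comm]
  rfl

lemma frobNorm_smul (c : ℝ) (hc : 0 ≤ c) (M : Matrix m l ℝ) :
    frobNorm (c • M) = c * frobNorm M := by
  unfold frobNorm
  have : ∑ i, ∑ j, ((c • M) i j)^2 = c^2 * ∑ i, ∑ j, (M i j)^2 := by
    simp [Finset.mul_sum, mul_pow]
  rw [this, Real.sqrt_mul (sq_nonneg c), Real.sqrt_sq hc]

lemma frobNorm_mono (M N : Matrix m l ℝ) (h : ∀ i j, |M i j| ≤ |N i j|) :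
    frobNorm M ≤ frobNorm N := by
  apply Real.sqrt_le_sqrt
  apply Finset.sum_le_sum
  intro i _
  apply Finset.sum_le_sum
  intro j _
  rw [← sq_abs (M i j), ← sq_abs (N i j)]
  exact pow_le_pow_left₀ (abs_nonneg _) (h i j) 2

lemma frobSq_trace (M : Matrix m l ℝ) : ∑ i, ∑ j, (M i j)^2 = (Mᵀ * M).trace := by
  rw [Matrix.trace]
  simp only [Matrix.diag, Matrix.mul_apply, Matrix.transpose_apply, pow_two]
  exact Finset.sum_comm

lemma frobNorm_conj {κ : Type*} [Fintype κ] [DecidableEq κ] (Q M : Matrix κ κ ℝ)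
    (hQ : Qᵀ * Q = 1) : frobNorm (Qᵀ * M * Q) = frobNorm M := by
  have hQ' : Q * Qᵀ = 1 := mul_eq_one_comm.mp hQ
  unfold frobNorm
  congr 1
  rw [frobSq_trace, frobSq_trace]
  have h1 : (Qᵀ * M * Q)ᵀ * (Qᵀ * M * Q) = Qᵀ * (Mᵀ * M) * Q := by
    simp only [Matrix.transpose_mul, Matrix.transpose_transpose, Matrix.mul_assoc]
    rw [← Matrix.mul_assoc Q Qᵀ, hQ', Matrix.one_mul]
  rw [h1, Matrix.trace_mul_cycle, ← Matrix.mul_assoc, hQ', Matrix.one_mul]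

lemma frobNorm_diagonal {κ : Type*} [Fintype κ] [DecidableEq κ] (g : κ → ℝ) :
    frobNorm (Matrix.diagonal g) = Real.sqrt (∑ i, (g i)^2) := by
  unfold frobNorm
  congr 1
  apply Finset.sum_congr rfl
  intro i _
  rw [Finset.sum_eq_single i]
  · rw [Matrix.diagonal_apply_eq]
  · intro j _ hj
    rw [Matrix.diagonal_apply_ne' _ hj]
    ring
  · intro h
    exact absurd (Finset.mem_univ i) h

end Helpers

set_option maxHeartbeats 1000000 in
/-- Theorem 1, exact non-asymptotic form: with `X` a matrix of orthonormal
eigenvectors of `A` for the `k` largest eigenvalues (`λ_1 = 1`), `Φ` a nonnegative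
orthonormal indicator matrix, `Z = Φ S Qᵀ` and `Δ = X − Z`, one has
`s_min² ‖I_k − Φᵀ A Φ‖ ≤ L_k + 2 ‖Δᵀ A X‖ + ‖Δᵀ A Δ‖`. -/
theorem stmt15 (n k : ℕ) (hn : 0 < n) (hk : 0 < k) (hkn : k ≤ n)
    (B : Matrix (Fin n) (Fin n) ℝ) (hBsymm : B.IsSymm)
    (hBnn : ∀ i j, 0 ≤ B i j) (hBdiag : ∀ i, B i i = 0)
    (d : Fin n → ℝ) (hd : ∀ i, d i = ∑ j, B i j) (hdpos : ∀ i, 0 < d i)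
    (A : Matrix (Fin n) (Fin n) ℝ)
    (hA : A = Matrix.diagonal (fun i => (Real.sqrt (d i))⁻¹) * B *
      Matrix.diagonal (fun i => (Real.sqrt (d i))⁻¹))
    (lam : Fin n → ℝ) (hmono : ∀ i j : Fin n, i ≤ j → lam j ≤ lam i)
    (U : Matrix (Fin n) (Fin n) ℝ) (hU : Uᵀ * U = 1)
    (hdiag : A = U * Matrix.diagonal lam * Uᵀ)
    (hlam1 : lam ⟨0, hn⟩ = 1)
    (X : Matrix (Fin n) (Fin k) ℝ) (hX : Xᵀ * X = 1)
    (hXeig : ∀ j : Fin k,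
      A.mulVec (fun i => X i j) = lam (Fin.castLE hkn j) • (fun i => X i j))
    (p : Fin n → Fin k) (hp : Function.Surjective p)
    (Φ : Matrix (Fin n) (Fin k) ℝ) (hΦ : IsIndicatorFor Φ p)
    (s : Fin k → ℝ) (hs0 : ∀ i, 0 < s i) (hs1 : ∀ i, s i ≤ 1)
    (smin : ℝ) (hsmin : IsLeast (Set.range s) smin)
    (Q : Matrix (Fin k) (Fin k) ℝ) (hQ : Qᵀ * Q = 1)
    (Z : Matrix (Fin n) (Fin k) ℝ) (hZ : Z = Φ * Matrix.diagonal s * Qᵀ)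
    (Δ : Matrix (Fin n) (Fin k) ℝ) (hΔ : Δ = X - Z) :
    smin ^ 2 * frobNorm ((1 : Matrix (Fin k) (Fin k) ℝ) - Φᵀ * A * Φ) ≤
      Real.sqrt (∑ ν : Fin k, if ν.val = 0 then 0
          else (1 - lam (Fin.castLE hkn ν)) ^ 2) +
        2 * frobNorm (Δᵀ * A * X) + frobNorm (Δᵀ * A * Δ) := by
  obtain ⟨hΦo, hΦpos, hΦzero⟩ := hΦ
  have hUUT : U * Uᵀ = 1 := mul_eq_one_comm.mp hU
  -- basic facts
  have hAsym : Aᵀ = A := by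
    rw [hdiag]
    simp [Matrix.transpose_mul, Matrix.mul_assoc]
  have hlamle : ∀ a : Fin n, lam a ≤ 1 := by
    intro a
    rw [← hlam1]
    exact hmono ⟨0, hn⟩ a (by simp [Fin.le_def])
  have hAnn : ∀ a b, 0 ≤ A a b := by
    intro a b
    rw [hA]
    simp only [Matrix.mul_diagonal, Matrix.diagonal_mul]
    have h1 : 0 ≤ (Real.sqrt (d a))⁻¹ := by positivity
    have h2 : 0 ≤ (Real.sqrt (d b))⁻¹ := by positivity
    exact mul_nonneg (mul_nonneg h1 (hBnn a b)) h2
  have hΦnn : ∀ i ℓ, 0 ≤ Φ i ℓ := by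
    intro i ℓ
    by_cases h : ℓ = p i
    · subst h; exact (hΦpos i).le
    · exact le_of_eq (hΦzero i ℓ h).symm
  set G := Φᵀ * A * Φ with hG
  have hGnn : ∀ i j, 0 ≤ G i j := by
    intro i j
    rw [hG]
    simp only [Matrix.mul_apply, Matrix.transpose_apply]
    apply Finset.sum_nonneg
    intro a _
    apply mul_nonneg _ (hΦnn a j)
    apply Finset.sum_nonneg
    intro b _
    exact mul_nonneg (hΦnn b i) (hAnn b a)
  -- diagonal entries of G are at most 1
  have hGdiag : ∀ i, G i i ≤ 1 := by
    intro i
    have key1 : (1 : Matrix (Fin k) (Fin k) ℝ) - G =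
        (Φᵀ * U) * (1 - Matrix.diagonal lam) * (Φᵀ * U)ᵀ := by
      have e1 : (Φᵀ * U) * (1 - Matrix.diagonal lam) * (Φᵀ * U)ᵀ
          = Φᵀ * (U * Uᵀ) * Φ - Φᵀ * (U * Matrix.diagonal lam * Uᵀ) * Φ := by
        rw [Matrix.mul_sub, Matrix.mul_one, Matrix.sub_mul]
        congr 1 <;> simp [Matrix.transpose_mul, Matrix.mul_assoc]
      rw [e1, hUUT, Matrix.mul_one, hΦo, hG, hdiag]
    have hd1 : (1 : Matrix (Fin n) (Fin n) ℝ) - Matrix.diagonal lam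
        = Matrix.diagonal (fun a => 1 - lam a) := by
      rw [← Matrix.diagonal_one, ← Matrix.diagonal_sub]
    have key2 : (0:ℝ) ≤ ((1 : Matrix (Fin k) (Fin k) ℝ) - G) i i := by
      rw [key1, hd1]
      have e2 : ((Φᵀ * U) * Matrix.diagonal (fun a => 1 - lam a) * (Φᵀ * U)ᵀ) i i
          = ∑ a, (1 - lam a) * ((Φᵀ * U) i a)^2 := by
        rw [Matrix.mul_apply]
        apply Finset.sum_congr rfl
        intro a _
        rw [Matrix.mul_diagonal, Matrix.transpose_apply]
        ring
      rw [e2]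
      apply Finset.sum_nonneg
      intro a _
      exact mul_nonneg (by linarith [hlamle a]) (sq_nonneg _)
    have := key2
    simp only [Matrix.sub_apply, Matrix.one_apply_eq] at this
    linarith
  -- facts about smin
  obtain ⟨i0, hi0⟩ := hsmin.1
  have hsminpos : 0 < smin := hi0 ▸ hs0 i0
  have hsminle : ∀ i, smin ≤ s i := fun i => hsmin.2 ⟨i, rfl⟩
  have hsmin1 : smin ≤ 1 := le_trans (hsminle i0) (hs1 i0)
  set Smat := Matrix.diagonal s with hSmat
  -- entrywise comparison step
  have step1 : smin ^ 2 * frobNorm ((1 : Matrix (Fin k) (Fin k) ℝ) - G)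
      ≤ frobNorm ((1 : Matrix (Fin k) (Fin k) ℝ) - Smat * G * Smat) := by
    rw [← frobNorm_smul (smin^2) (by positivity)]
    apply frobNorm_mono
    intro i j
    have hGij := hGnn i j
    have hsi := hs0 i
    have hsj := hs0 j
    have hsi1 := hs1 i
    have hsj1 := hs1 j
    have hsmi := hsminle i
    have hsmj := hsminle j
    by_cases h : i = j
    · subst h
      have hGd := hGdiag i
      have e1 : ((smin ^ 2) • ((1 : Matrix (Fin k) (Fin k) ℝ) - G)) i i
          = smin ^ 2 * (1 - G i i) := by
        simp [Matrix.smul_apply, Matrix.sub_apply, Matrix.one_apply_eq]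
      have e2 : ((1 : Matrix (Fin k) (Fin k) ℝ) - Smat * G * Smat) i i
          = 1 - s i * G i i * s i := by
        simp [hSmat, Matrix.sub_apply, Matrix.one_apply_eq, Matrix.diagonal_mul,
          Matrix.mul_diagonal]
      have h1 : s i * s i ≤ 1 := by nlinarith
      have h2 : s i * G i i * s i ≤ G i i := by
        nlinarith [mul_le_mul_of_nonneg_left h1 hGij]
      have hsm2 : smin ^ 2 ≤ 1 := by nlinarith
      rw [e1, e2, abs_of_nonneg (by nlinarith [sq_nonneg smin]), abs_of_nonneg (by linarith)]
      nlinarith [mul_le_mul_of_nonneg_right hsm2 (show (0:ℝ) ≤ 1 - G i i by linarith)]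
    · have e1 : ((smin ^ 2) • ((1 : Matrix (Fin k) (Fin k) ℝ) - G)) i j
          = smin ^ 2 * (0 - G i j) := by
        simp [Matrix.smul_apply, Matrix.sub_apply, Matrix.one_apply_ne h]
      have e2 : ((1 : Matrix (Fin k) (Fin k) ℝ) - Smat * G * Smat) i j
          = 0 - s i * G i j * s j := by
        simp [hSmat, Matrix.sub_apply, Matrix.one_apply_ne h, Matrix.diagonal_mul,
          Matrix.mul_diagonal]
      have hss : smin * smin ≤ s i * s j := mul_le_mul hsmi hsmj hsminpos.le hsi.le
      rw [e1, e2, abs_of_nonpos (by nlinarith [sq_nonneg smin]),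
        abs_of_nonpos (by nlinarith [mul_nonneg (mul_nonneg hsi.le hGij) hsj.le])]
      nlinarith [mul_le_mul_of_nonneg_left hss hGij]
  -- conjugation identity
  have step2 : (1 : Matrix (Fin k) (Fin k) ℝ) - Smat * G * Smat
      = Qᵀ * ((1 : Matrix (Fin k) (Fin k) ℝ) - Zᵀ * A * Z) * Q := by
    have e1 : Qᵀ * (Zᵀ * A * Z) * Q = Smat * G * Smat := by
      rw [hZ, hG]
      simp only [Matrix.transpose_mul, Matrix.transpose_transpose,
        Matrix.diagonal_transpose, Matrix.mul_assoc, hSmat]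
      rw [← Matrix.mul_assoc Qᵀ Q, hQ, Matrix.one_mul]
      simp only [Matrix.mul_one]
    rw [Matrix.mul_sub, Matrix.sub_mul, Matrix.mul_one, hQ, e1]
  have step3 : frobNorm (Qᵀ * ((1 : Matrix (Fin k) (Fin k) ℝ) - Zᵀ * A * Z) * Q)
      = frobNorm ((1 : Matrix (Fin k) (Fin k) ℝ) - Zᵀ * A * Z) :=
    frobNorm_conj Q _ hQ
  -- expansion
  have hZX : Z = X - Δ := by rw [hΔ, sub_sub_cancel]
  have hXAΔ : Xᵀ * A * Δ = (Δᵀ * A * X)ᵀ := by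
    rw [Matrix.transpose_mul, Matrix.transpose_mul, Matrix.transpose_transpose, hAsym,
      Matrix.mul_assoc]
  have expand : (1 : Matrix (Fin k) (Fin k) ℝ) - Zᵀ * A * Z
      = (((1 : Matrix (Fin k) (Fin k) ℝ) - Xᵀ * A * X) + Δᵀ * A * X + (Δᵀ * A * X)ᵀ)
        - Δᵀ * A * Δ := by
    rw [hZX, ← hXAΔ]
    rw [Matrix.transpose_sub, Matrix.sub_mul, Matrix.sub_mul, Matrix.mul_sub, Matrix.mul_sub]
    abel
  -- the eigenvalue computation
  have hAX : Xᵀ * A * X = Matrix.diagonal (fun ν : Fin k => lam (Fin.castLE hkn ν)) := by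
    have h1 : A * X = X * Matrix.diagonal (fun ν : Fin k => lam (Fin.castLE hkn ν)) := by
      ext a j
      have h2 := congrFun (hXeig j) a
      simp only [Matrix.mulVec, dotProduct, Pi.smul_apply, smul_eq_mul] at h2
      rw [Matrix.mul_apply, Matrix.mul_diagonal]
      rw [h2]; ring
    rw [Matrix.mul_assoc, h1, ← Matrix.mul_assoc, hX, Matrix.one_mul]
  have hIXAX : (1 : Matrix (Fin k) (Fin k) ℝ) - Xᵀ * A * X
      = Matrix.diagonal (fun ν : Fin k => 1 - lam (Fin.castLE hkn ν)) := by
    rw [hAX, ← Matrix.diagonal_one, ← Matrix.diagonal_sub]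
  have hLk : frobNorm ((1 : Matrix (Fin k) (Fin k) ℝ) - Xᵀ * A * X)
      = Real.sqrt (∑ ν : Fin k, if ν.val = 0 then 0
          else (1 - lam (Fin.castLE hkn ν)) ^ 2) := by
    rw [hIXAX, frobNorm_diagonal]
    congr 1
    apply Finset.sum_congr rfl
    intro ν _
    by_cases hν : ν.val = 0
    · rw [if_pos hν]
      have : Fin.castLE hkn ν = ⟨0, hn⟩ := Fin.ext (by simpa using hν)
      rw [this, hlam1]
      ring
    · rw [if_neg hν]
  -- triangle inequality
  have step4 : frobNorm ((1 : Matrix (Fin k) (Fin k) ℝ) - Zᵀ * A * Z)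
      ≤ frobNorm ((1 : Matrix (Fin k) (Fin k) ℝ) - Xᵀ * A * X)
        + 2 * frobNorm (Δᵀ * A * X) + frobNorm (Δᵀ * A * Δ) := by
    rw [expand]
    calc frobNorm ((((1 : Matrix (Fin k) (Fin k) ℝ) - Xᵀ * A * X) + Δᵀ * A * X
          + (Δᵀ * A * X)ᵀ) - Δᵀ * A * Δ)
        ≤ frobNorm (((1 : Matrix (Fin k) (Fin k) ℝ) - Xᵀ * A * X) + Δᵀ * A * X
          + (Δᵀ * A * X)ᵀ) + frobNorm (Δᵀ * A * Δ) := frobNorm_sub_le _ _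
      _ ≤ (frobNorm (((1 : Matrix (Fin k) (Fin k) ℝ) - Xᵀ * A * X) + Δᵀ * A * X)
          + frobNorm ((Δᵀ * A * X)ᵀ)) + frobNorm (Δᵀ * A * Δ) := by
            gcongr; exact frobNorm_add_le _ _
      _ ≤ ((frobNorm ((1 : Matrix (Fin k) (Fin k) ℝ) - Xᵀ * A * X) + frobNorm (Δᵀ * A * X))
          + frobNorm ((Δᵀ * A * X)ᵀ)) + frobNorm (Δᵀ * A * Δ) := by
            gcongr; exact frobNorm_add_le _ _
      _ = frobNorm ((1 : Matrix (Fin k) (Fin k) ℝ) - Xᵀ * A * X)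
          + 2 * frobNorm (Δᵀ * A * X) + frobNorm (Δᵀ * A * Δ) := by
            rw [frobNorm_transpose]; ring
  calc smin ^ 2 * frobNorm ((1 : Matrix (Fin k) (Fin k) ℝ) - Φᵀ * A * Φ)
      ≤ frobNorm ((1 : Matrix (Fin k) (Fin k) ℝ) - Smat * G * Smat) := step1
    _ = frobNorm ((1 : Matrix (Fin k) (Fin k) ℝ) - Zᵀ * A * Z) := by rw [step2, step3]
    _ ≤ frobNorm ((1 : Matrix (Fin k) (Fin k) ℝ) - Xᵀ * A * X)
        + 2 * frobNorm (Δᵀ * A * X) + frobNorm (Δᵀ * A * Δ) := step4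
    _ = Real.sqrt (∑ ν : Fin k, if ν.val = 0 then 0
          else (1 - lam (Fin.castLE hkn ν)) ^ 2)
        + 2 * frobNorm (Δᵀ * A * X) + frobNorm (Δᵀ * A * Δ) := by rw [hLk]
end
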